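/- arXiv:1706.08235 — 13 statements merged into one kernel-verified Lean document; each statement's English description precedes it below -/
import Mathlib

section
/- Let R be a commutative ring, L a Lie algebra over R, and φ : L → L a Lie algebra homomorphism with φ ∘ φ = φ. Define operations x ⊢ y := ⁅φ x, y⁆, x ⊣ y := ⁅x, φ y⁆, x ⊥ y := ⁅x, y⁆. Then for all x, y, z ∈ L the Lie tri-algebra identities hold: (i) x ⊢ y = -(y ⊣ x); (ii) x ⊥ y = -(y ⊥ x); (iii) (x ⊥ y) ⊢ z = (x ⊢ y) ⊢ z; (iv) x ⊢ (y ⊢ z) = (x ⊢ y) ⊢ z + y ⊢ (x ⊢ z) (left Leibniz identity for ⊢); (v) (x ⊢ y) ⊥ z = x ⊢ (y ⊥ z) + (x ⊢ z) ⊥ y; (vi) ((x ⊥ y) ⊥ z) + ((y ⊥ z) ⊥ x) + ((z ⊥ x) ⊥ y) = 0. -/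
/-! Identities (i), (ii), (v) and (vi) hold in every Lie ring: they are antisymmetry and the
Jacobi identity. Identities (iii) and (iv) rest on one fact about an idempotent homomorphism:
`φ ⁅φ x, y⁆ = ⁅φ (φ x), φ y⁆ = ⁅φ x, φ y⁆ = φ ⁅x, y⁆`. -/

section LieRing

variable {L : Type*} [LieRing L]

theorem lie_lie_eq_lie_lie_add_lie_lie (x y z : L) : ⁅⁅x, y⁆, z⁆ = ⁅x, ⁅y, z⁆⁆ + ⁅⁅x, z⁆, y⁆ := by
  rw [lie_lie, ← lie_skew y ⁅x, z⁆, sub_neg_eq_add]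

theorem lie_jacobi_left (x y z : L) : ⁅⁅x, y⁆, z⁆ + ⁅⁅y, z⁆, x⁆ + ⁅⁅z, x⁆, y⁆ = 0 := by
  rw [← lie_skew ⁅x, y⁆ z, ← lie_skew ⁅y, z⁆ x, ← lie_skew ⁅z, x⁆ y, ← neg_add, ← neg_add,
    lie_jacobi z x y, neg_zero]

end LieRing

theorem LieHom.map_lie_map_left_of_idempotent {R L : Type*} [CommRing R] [LieRing L]
    [LieAlgebra R L] {φ : L →ₗ⁅R⁆ L} (hφ : ∀ x : L, φ (φ x) = φ x) (x y : L) :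
    φ ⁅φ x, y⁆ = ⁅φ x, φ y⁆ := by
  rw [φ.map_lie, hφ]

/-- A homomorphic averaging operator `φ` on a Lie algebra `L` induces a
Lie tri-algebra structure with `x ⊢ y := ⁅φ x, y⁆`, `x ⊣ y := ⁅x, φ y⁆`, `x ⊥ y := ⁅x, y⁆`. -/
theorem lie_trialgebra_of_averaging (R : Type*) [CommRing R] (L : Type*) [LieRing L]
    [LieAlgebra R L] (φ : L →ₗ⁅R⁆ L) (hφ : ∀ x : L, φ (φ x) = φ x) :
    ∀ x y z : L,
      (⁅φ x, y⁆ = -⁅y, φ x⁆) ∧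
      (⁅x, y⁆ = -⁅y, x⁆) ∧
      (⁅φ ⁅x, y⁆, z⁆ = ⁅φ ⁅φ x, y⁆, z⁆) ∧
      (⁅φ x, ⁅φ y, z⁆⁆ = ⁅φ ⁅φ x, y⁆, z⁆ + ⁅φ y, ⁅φ x, z⁆⁆) ∧
      (⁅⁅φ x, y⁆, z⁆ = ⁅φ x, ⁅y, z⁆⁆ + ⁅⁅φ x, z⁆, y⁆) ∧
      (⁅⁅x, y⁆, z⁆ + ⁅⁅y, z⁆, x⁆ + ⁅⁅z, x⁆, y⁆ = 0) := by
  intro x y z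
  refine ⟨(lie_skew _ _).symm, (lie_skew _ _).symm, ?_, ?_,
    lie_lie_eq_lie_lie_add_lie_lie _ _ _, lie_jacobi_left x y z⟩
  · rw [φ.map_lie_map_left_of_idempotent hφ, φ.map_lie]
  · rw [φ.map_lie_map_left_of_idempotent hφ, leibniz_lie]
end

section
/- Let k be a field and X a type; in F := FreeLieAlgebra k (X ⊕ X), with plain generators x̄ := ι(Sum.inl x) and dotted generators ẋ := ι(Sum.inr x), let φ : F → F be the unique Lie algebra homomorphism with φ(x̄) = x̄ and φ(ẋ) = x̄ for all x ∈ X. Then the smallest k-submodule W of F that contains all dotted generators ẋ and is closed under the three tri-algebra operations (for all a, b ∈ W: ⁅φ(a), b⁆ ∈ W, ⁅a, φ(b)⁆ ∈ W, ⁅a, b⁆ ∈ W) coincides, as a submodule of F, with the Lie ideal of F generated by the set {ẋ : x ∈ X}. -/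
/-!
The Lie ideal generated by the dotted generators is closed under the three operations, since
each of them is a bracket with one argument in the ideal. Conversely, any submodule `W` in the
family is stable under `ad ẋ` (the operation `⊥`) and under `ad x̄ = ad φ(ẋ)` (the operation `⊢`),
i.e. under bracketing with every generator of the free Lie algebra; since the elements whose
adjoint action preserves `W` form a Lie subalgebra, `W` is a Lie ideal, hence contains the ideal
generated by the dotted generators.
-/

section Stabilizer

variable {R L M : Type*} [CommRing R] [LieRing L] [LieAlgebra R L]
  [AddCommGroup M] [Module R M] [LieRingModule L M] [LieModule R L M]

variable (L) in
def Submodule.lieStabilizer (N : Submodule R M) : LieSubalgebra R L where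
  carrier := {c | ∀ m ∈ N, ⁅c, m⁆ ∈ N}
  zero_mem' m _ := by simp
  add_mem' hc hd m hm := by rw [add_lie]; exact N.add_mem (hc m hm) (hd m hm)
  smul_mem' t c hc m hm := by rw [smul_lie]; exact N.smul_mem t (hc m hm)
  lie_mem' {c d} hc hd m hm := by rw [lie_lie]; exact N.sub_mem (hc _ (hd m hm)) (hd _ (hc m hm))

theorem Submodule.mem_lieStabilizer {N : Submodule R M} {c : L} :
    c ∈ N.lieStabilizer L ↔ ∀ m ∈ N, ⁅c, m⁆ ∈ N :=
  Iff.rfl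

end Stabilizer

namespace FreeLieAlgebra

variable {R X M : Type*} [CommRing R]

theorem lieSubalgebra_eq_top_of_of_mem {K : LieSubalgebra R (FreeLieAlgebra R X)}
    (h : ∀ x : X, of R x ∈ K) : K = ⊤ := by
  have hid : K.incl.comp (lift R fun x => (⟨of R x, h x⟩ : K)) = LieHom.id (R := R) :=
    hom_ext fun x => by simp [lift_of_apply]
  refine eq_top_iff.2 fun a _ => ?_
  rw [← LieHom.id_apply (R := R) a, ← hid]
  exact Subtype.property _

variable [AddCommGroup M] [Module R M] [LieRingModule (FreeLieAlgebra R X) M]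
  [LieModule R (FreeLieAlgebra R X) M]

theorem lie_mem_of_forall_of_lie_mem {N : Submodule R M} (h : ∀ x : X, ∀ m ∈ N, ⁅of R x, m⁆ ∈ N)
    (c : FreeLieAlgebra R X) {m : M} (hm : m ∈ N) : ⁅c, m⁆ ∈ N := by
  have : N.lieStabilizer (FreeLieAlgebra R X) = ⊤ := lieSubalgebra_eq_top_of_of_mem h
  exact Submodule.mem_lieStabilizer.1 (this ▸ LieSubalgebra.mem_top c) m hm

theorem lieSpan_le_of_forall_of_lie_mem {s : Set M} {N : Submodule R M} (hs : s ⊆ N)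
    (h : ∀ x : X, ∀ m ∈ N, ⁅of R x, m⁆ ∈ N) :
    (LieSubmodule.lieSpan R (FreeLieAlgebra R X) s).toSubmodule ≤ N :=
  LieSubmodule.lieSpan_le (N := { N with lie_mem := lie_mem_of_forall_of_lie_mem h _ }).2 hs

end FreeLieAlgebra

open FreeLieAlgebra in
theorem trialgebra_closure_eq_lieIdeal_general (k : Type*) [Field k] (X : Type*)
    (φ : FreeLieAlgebra k (X ⊕ X) →ₗ⁅k⁆ FreeLieAlgebra k (X ⊕ X))
    (hφr : ∀ x : X, φ (FreeLieAlgebra.of k (Sum.inr x)) = FreeLieAlgebra.of k (Sum.inl x)) :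
    sInf {W : Submodule k (FreeLieAlgebra k (X ⊕ X)) |
        (∀ x : X, FreeLieAlgebra.of k (Sum.inr x) ∈ W) ∧
        ∀ a b : FreeLieAlgebra k (X ⊕ X), a ∈ W → b ∈ W →
          ⁅φ a, b⁆ ∈ W ∧ ⁅a, φ b⁆ ∈ W ∧ ⁅a, b⁆ ∈ W} =
      LieSubmodule.toSubmodule
        (LieSubmodule.lieSpan k (FreeLieAlgebra k (X ⊕ X))
          (Set.range fun x : X => FreeLieAlgebra.of k (Sum.inr x))) := by
  refine le_antisymm (sInf_le ⟨fun x => LieSubmodule.subset_lieSpan ⟨x, rfl⟩, ?_⟩) (le_sInf ?_)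
  · intro a b ha hb
    exact ⟨LieSubmodule.lie_mem _ hb, lie_skew a (φ b) ▸ neg_mem (LieSubmodule.lie_mem _ ha),
      LieSubmodule.lie_mem _ hb⟩
  · rintro W ⟨hgen, hclosed⟩
    refine lieSpan_le_of_forall_of_lie_mem (by rintro _ ⟨x, rfl⟩; exact hgen x) ?_
    rintro (x | x) a ha
    · exact hφr x ▸ (hclosed _ a (hgen x) ha).1
    · exact (hclosed _ a (hgen x) ha).2.2

/-- In the free Lie algebra on `X ⊕ X`, the sub-tri-algebra generated by the
dotted generators (the smallest submodule containing them closed under the three tri-algebra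
operations) coincides with the Lie ideal generated by the dotted generators. -/
theorem trialgebra_closure_eq_lieIdeal (k : Type*) [Field k] (X : Type*)
    (φ : FreeLieAlgebra k (X ⊕ X) →ₗ⁅k⁆ FreeLieAlgebra k (X ⊕ X))
    (hφl : ∀ x : X, φ (FreeLieAlgebra.of k (Sum.inl x)) = FreeLieAlgebra.of k (Sum.inl x))
    (hφr : ∀ x : X, φ (FreeLieAlgebra.of k (Sum.inr x)) = FreeLieAlgebra.of k (Sum.inl x)) :
    sInf {W : Submodule k (FreeLieAlgebra k (X ⊕ X)) |
        (∀ x : X, FreeLieAlgebra.of k (Sum.inr x) ∈ W) ∧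
        ∀ a b : FreeLieAlgebra k (X ⊕ X), a ∈ W → b ∈ W →
          ⁅φ a, b⁆ ∈ W ∧ ⁅a, φ b⁆ ∈ W ∧ ⁅a, b⁆ ∈ W} =
      LieSubmodule.toSubmodule
        (LieSubmodule.lieSpan k (FreeLieAlgebra k (X ⊕ X))
          (Set.range fun x : X => FreeLieAlgebra.of k (Sum.inr x))) :=
  trialgebra_closure_eq_lieIdeal_general k X φ hφr
end

section
/- Let k be a field and X a type; in F := FreeAlgebra k (X ⊕ X), with plain generators x̄ := ι(Sum.inl x) and dotted generators ẋ := ι(Sum.inr x), let φ : F → F be the unique algebra homomorphism with φ(x̄) = x̄ and φ(ẋ) = x̄ for all x ∈ X. Then the smallest k-submodule W of F that contains all dotted generators ẋ and is closed under the three tri-algebra operations (for all a, b ∈ W: φ(a)·b ∈ W, a·φ(b) ∈ W, a·b ∈ W) coincides, as a submodule of F, with the two-sided ideal of F generated by the set {ẋ : x ∈ X}. -/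
/-!
The ideal generated by the dotted generators is closed under all three operations, so it
contains `W`. Conversely, `W` is closed under multiplication by `ẏ` on either side (through
`a ⊥ b`) and by `ȳ = φ ẏ` on either side (through `a ⊢ b` and `a ⊣ b`); since the `ȳ, ẏ`
generate `F` as an algebra, `W` is a two-sided ideal containing every `ẏ`.
-/

section

variable {R A : Type*} {s : Set A}

theorem Submodule.mul_mem_left_of_adjoin_eq_top [CommSemiring R] [Semiring A] [Algebra R A]
    (hs : Algebra.adjoin R s = ⊤) {W : Submodule R A}
    (hW : ∀ x ∈ s, ∀ a ∈ W, x * a ∈ W) (c : A) {a : A} (ha : a ∈ W) :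
    c * a ∈ W := by
  have hc : c ∈ Algebra.adjoin R s := hs ▸ Algebra.mem_top
  induction hc using Algebra.adjoin_induction generalizing a with
  | mem x hx => exact hW x hx a ha
  | algebraMap r => simpa only [Algebra.algebraMap_eq_smul_one, smul_mul_assoc, one_mul]
      using W.smul_mem r ha
  | add x y _ _ hx hy => simpa only [add_mul] using W.add_mem (hx ha) (hy ha)
  | mul x y _ _ hx hy => simpa only [mul_assoc] using hx (hy ha)

theorem Submodule.mul_mem_right_of_adjoin_eq_top [CommSemiring R] [Semiring A] [Algebra R A]
    (hs : Algebra.adjoin R s = ⊤) {W : Submodule R A}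
    (hW : ∀ x ∈ s, ∀ a ∈ W, a * x ∈ W) (c : A) {a : A} (ha : a ∈ W) :
    a * c ∈ W := by
  have hc : c ∈ Algebra.adjoin R s := hs ▸ Algebra.mem_top
  induction hc using Algebra.adjoin_induction generalizing a with
  | mem x hx => exact hW x hx a ha
  | algebraMap r => simpa only [Algebra.algebraMap_eq_smul_one, mul_smul_comm, mul_one]
      using W.smul_mem r ha
  | add x y _ _ hx hy => simpa only [mul_add] using W.add_mem (hx ha) (hy ha)
  | mul x y _ _ hx hy => simpa only [← mul_assoc] using hy (hx ha)

theorem TwoSidedIdeal.coe_span_subset_of_adjoin_eq_top [CommRing R] [Ring A] [Algebra R A]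
    (hs : Algebra.adjoin R s = ⊤) {W : Submodule R A}
    (hl : ∀ x ∈ s, ∀ a ∈ W, x * a ∈ W) (hr : ∀ x ∈ s, ∀ a ∈ W, a * x ∈ W)
    {t : Set A} (ht : t ⊆ W) : (TwoSidedIdeal.span t : Set A) ⊆ W := by
  let I : TwoSidedIdeal A := .mk' W W.zero_mem W.add_mem W.neg_mem
    (W.mul_mem_left_of_adjoin_eq_top hs hl _) (W.mul_mem_right_of_adjoin_eq_top hs hr _)
  have hI : (I : Set A) = W := TwoSidedIdeal.coe_mk' ..
  exact hI ▸ TwoSidedIdeal.span_le.2 (hI ▸ ht)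

end

theorem trialgebra_closure_eq_twoSidedIdeal_general (k : Type*) [Field k] (X : Type*)
    (φ : FreeAlgebra k (X ⊕ X) →ₐ[k] FreeAlgebra k (X ⊕ X))
    (hφr : ∀ x : X, φ (FreeAlgebra.ι k (Sum.inr x)) = FreeAlgebra.ι k (Sum.inl x)) :
    ((sInf {W : Submodule k (FreeAlgebra k (X ⊕ X)) |
        (∀ x : X, FreeAlgebra.ι k (Sum.inr x) ∈ W) ∧
        ∀ a b : FreeAlgebra k (X ⊕ X), a ∈ W → b ∈ W →
          φ a * b ∈ W ∧ a * φ b ∈ W ∧ a * b ∈ W} : Submodule k (FreeAlgebra k (X ⊕ X))) :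
        Set (FreeAlgebra k (X ⊕ X))) =
      ((TwoSidedIdeal.span (Set.range fun x : X => FreeAlgebra.ι k (Sum.inr x : X ⊕ X))) :
        Set (FreeAlgebra k (X ⊕ X))) := by
  set S := {W : Submodule k (FreeAlgebra k (X ⊕ X)) | _ ∧ _}
  set I := TwoSidedIdeal.span (Set.range fun x : X => FreeAlgebra.ι k (Sum.inr x : X ⊕ X))
  have hgen (x : X) : FreeAlgebra.ι k (Sum.inr x) ∈ sInf S :=
    Submodule.mem_sInf.2 fun V hV => hV.1 x
  have hclosed {a b} (ha : a ∈ sInf S) (hb : b ∈ sInf S) :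
      φ a * b ∈ sInf S ∧ a * φ b ∈ sInf S ∧ a * b ∈ sInf S := by
    simp only [Submodule.mem_sInf] at ha hb ⊢
    exact ⟨fun V hV => (hV.2 a b (ha V hV) (hb V hV)).1,
      fun V hV => (hV.2 a b (ha V hV) (hb V hV)).2.1,
      fun V hV => (hV.2 a b (ha V hV) (hb V hV)).2.2⟩
  have hI : (TwoSidedIdeal.asIdeal I).restrictScalars k ∈ S :=
    ⟨fun x => TwoSidedIdeal.subset_span ⟨x, rfl⟩, fun a b ha hb =>
      ⟨I.mul_mem_left _ _ hb, I.mul_mem_right _ _ ha, I.mul_mem_right _ _ ha⟩⟩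
  refine subset_antisymm (fun _ hx => sInf_le hI hx) (TwoSidedIdeal.coe_span_subset_of_adjoin_eq_top
    (FreeAlgebra.adjoin_range_ι k (X ⊕ X)) ?_ ?_ (Set.range_subset_iff.2 hgen))
  · rintro _ ⟨y | y, rfl⟩ a ha
    · simpa only [hφr] using (hclosed (hgen y) ha).1
    · exact (hclosed (hgen y) ha).2.2
  · rintro _ ⟨y | y, rfl⟩ a ha
    · simpa only [hφr] using (hclosed ha (hgen y)).2.1
    · exact (hclosed ha (hgen y)).2.2

/-- In the free associative algebra on `X ⊕ X`, the sub-tri-algebra generated by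
the dotted generators (the smallest submodule containing them closed under the three tri-algebra
operations) coincides with the two-sided ideal generated by the dotted generators. -/
theorem trialgebra_closure_eq_twoSidedIdeal (k : Type*) [Field k] (X : Type*)
    (φ : FreeAlgebra k (X ⊕ X) →ₐ[k] FreeAlgebra k (X ⊕ X))
    (hφl : ∀ x : X, φ (FreeAlgebra.ι k (Sum.inl x)) = FreeAlgebra.ι k (Sum.inl x))
    (hφr : ∀ x : X, φ (FreeAlgebra.ι k (Sum.inr x)) = FreeAlgebra.ι k (Sum.inl x)) :
    ((sInf {W : Submodule k (FreeAlgebra k (X ⊕ X)) |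
        (∀ x : X, FreeAlgebra.ι k (Sum.inr x) ∈ W) ∧
        ∀ a b : FreeAlgebra k (X ⊕ X), a ∈ W → b ∈ W →
          φ a * b ∈ W ∧ a * φ b ∈ W ∧ a * b ∈ W} : Submodule k (FreeAlgebra k (X ⊕ X))) :
        Set (FreeAlgebra k (X ⊕ X))) =
      ((TwoSidedIdeal.span (Set.range fun x : X => FreeAlgebra.ι k (Sum.inr x : X ⊕ X))) :
        Set (FreeAlgebra k (X ⊕ X))) :=
  trialgebra_closure_eq_twoSidedIdeal_general k X φ hφr
end

section
/- Let k be a field and X a type; in F := FreeLieAlgebra k (X ⊕ X), with plain generators x̄ and dotted generators ẋ, let φ : F → F be the unique Lie algebra homomorphism with φ(x̄) = x̄ and φ(ẋ) = x̄, and let V be the Lie ideal of F generated by {ẋ : x ∈ X}. Let S be a subset of V, and let J be the smallest k-submodule of F containing S such that for all j ∈ J and v ∈ V one has ⁅φ(v), j⁆ ∈ J, ⁅j, φ(v)⁆ ∈ J, ⁅v, φ(j)⁆ ∈ J, ⁅φ(j), v⁆ ∈ J, ⁅v, j⁆ ∈ J, and ⁅j, v⁆ ∈ J. Then J equals the intersection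 (as submodules of F) of V with the Lie ideal of F generated by the set S ∪ φ(S). -/
/-!
Every `f` splits as `φ v + w` with `v, w ∈ V` (take for `v` the dotted copy of the plain part of
`f`), so a tri-closed submodule `J` is stable under `⁅f, -⁆`, and `J + φ(J)` is a Lie ideal:
`⁅f, φ j⁆ = φ ⁅v, j⁆ + ⁅w, φ j⁆`. It contains `S ∪ φ(S)`, hence the Lie ideal they generate.
Conversely `V ∩ ⟨S ∪ φ(S)⟩` is tri-closed because the idempotent `φ` preserves `⟨S ∪ φ(S)⟩`.
Finally, if `j + φ j'` lies in `V` with `j ∈ J ⊆ V`, then `φ j' ∈ V`; but `V` is the kernel of the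
projection killing the dotted generators, which fixes the image of `φ`, so `φ j' = 0`.
-/

open LieSubmodule

section TriIdeal

variable {R L : Type*} [CommRing R] [LieRing L] [LieAlgebra R L]

theorem LieHom.map_mem_lieSpan_union_image {φ : L →ₗ⁅R⁆ L} (hφ : ∀ x, φ (φ x) = φ x)
    {S : Set L} {x : L} (hx : x ∈ lieSpan R L (S ∪ φ '' S)) :
    φ x ∈ lieSpan R L (S ∪ φ '' S) := by
  suffices lieSpan R L (S ∪ φ '' S) ≤ LieIdeal.comap φ (lieSpan R L (S ∪ φ '' S)) from this hx
  refine lieSpan_le.mpr ?_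
  rintro s (hs | ⟨t, ht, rfl⟩)
  · exact subset_lieSpan (Or.inr ⟨s, hs, rfl⟩)
  · rw [SetLike.mem_coe, LieIdeal.mem_comap, hφ]
    exact subset_lieSpan (Or.inr ⟨t, ht, rfl⟩)

namespace LieIdeal

variable (V : LieIdeal R L) (φ : L →ₗ⁅R⁆ L)

/-- Closure under the three tri-algebra products `a ⊢ b = ⁅φ a, b⁆`, `a ⊣ b = ⁅a, φ b⁆` and
`a ⊥ b = ⁅a, b⁆` of `V`, on both sides. -/
def IsTriClosed (J : Submodule R L) : Prop :=
  ∀ j ∈ J, ∀ v ∈ V, ⁅φ v, j⁆ ∈ J ∧ ⁅j, φ v⁆ ∈ J ∧ ⁅v, φ j⁆ ∈ J ∧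
    ⁅φ j, v⁆ ∈ J ∧ ⁅v, j⁆ ∈ J ∧ ⁅j, v⁆ ∈ J

def triSpan (S : Set L) : Submodule R L :=
  sInf {J : Submodule R L | S ⊆ (J : Set L) ∧ V.IsTriClosed φ J}

variable {V φ}

theorem subset_triSpan (S : Set L) : S ⊆ (V.triSpan φ S : Set L) :=
  fun _ hs => Submodule.mem_sInf.2 fun _ hJ => hJ.1 hs

theorem isTriClosed_triSpan (S : Set L) : V.IsTriClosed φ (V.triSpan φ S) := by
  intro j hj v hv
  have hclosed : ∀ J ∈ {J : Submodule R L | S ⊆ (J : Set L) ∧ V.IsTriClosed φ J}, _ :=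
    fun J hJ => hJ.2 j (Submodule.mem_sInf.1 hj J hJ) v hv
  refine ⟨?_, ?_, ?_, ?_, ?_, ?_⟩ <;>
    exact Submodule.mem_sInf.2 fun J hJ => by have := hclosed J hJ; tauto

theorem triSpan_le {S : Set L} {J : Submodule R L} (hS : S ⊆ J) (hJ : V.IsTriClosed φ J) :
    V.triSpan φ S ≤ J :=
  sInf_le ⟨hS, hJ⟩

theorem isTriClosed_inf (I : LieIdeal R L) (hI : ∀ x ∈ I, φ x ∈ I) :
    V.IsTriClosed φ (V.toSubmodule ⊓ I.toSubmodule) := by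
  rintro j ⟨hjV, hjI⟩ v hv
  have hφjI : φ j ∈ I := hI j hjI
  exact ⟨⟨lie_mem_right _ _ _ _ _ hjV, lie_mem_right _ _ _ _ _ hjI⟩,
    ⟨lie_mem_left _ _ _ _ _ hjV, lie_mem_left _ _ _ _ _ hjI⟩,
    ⟨lie_mem_left _ _ _ _ _ hv, lie_mem_right _ _ _ _ _ hφjI⟩,
    ⟨lie_mem_right _ _ _ _ _ hv, lie_mem_left _ _ _ _ _ hφjI⟩,
    ⟨lie_mem_right _ _ _ _ _ hjV, lie_mem_right _ _ _ _ _ hjI⟩,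
    ⟨lie_mem_left _ _ _ _ _ hjV, lie_mem_left _ _ _ _ _ hjI⟩⟩

section Split

variable {J : Submodule R L}

theorem IsTriClosed.lie_mem (hJ : V.IsTriClosed φ J) (hsplit : ∀ f, ∃ v ∈ V, f - φ v ∈ V)
    (f : L) {j : L} (hj : j ∈ J) : ⁅f, j⁆ ∈ J := by
  obtain ⟨v, hv, hw⟩ := hsplit f
  rw [← add_sub_cancel (φ v) f, add_lie]
  exact add_mem (hJ j hj v hv).1 (hJ j hj _ hw).2.2.2.2.1

theorem IsTriClosed.lie_map_mem (hJ : V.IsTriClosed φ J) (hsplit : ∀ f, ∃ v ∈ V, f - φ v ∈ V)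
    (f : L) {j : L} (hj : j ∈ J) : ⁅f, φ j⁆ ∈ J ⊔ J.map (φ : L →ₗ[R] L) := by
  obtain ⟨v, hv, hw⟩ := hsplit f
  rw [← add_sub_cancel (φ v) f, add_lie, ← LieHom.map_lie]
  exact add_mem (Submodule.mem_sup_right ⟨_, (hJ j hj v hv).2.2.2.2.1, rfl⟩)
    (Submodule.mem_sup_left (hJ j hj _ hw).2.2.1)

def IsTriClosed.supMap (hJ : V.IsTriClosed φ J) (hsplit : ∀ f, ∃ v ∈ V, f - φ v ∈ V) :
    LieIdeal R L :=
  { J ⊔ J.map (φ : L →ₗ[R] L) with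
    lie_mem := fun {f} {m} hm => by
      obtain ⟨a, ha, _, ⟨j, hj, rfl⟩, rfl⟩ := Submodule.mem_sup.1 hm
      rw [lie_add]
      exact add_mem (Submodule.mem_sup_left (hJ.lie_mem hsplit f ha))
        (hJ.lie_map_mem hsplit f hj) }

end Split

theorem mem_of_mem_sup_map (hdisj : ∀ f, φ f ∈ V → φ f = 0) {J : Submodule R L}
    (hJV : J ≤ V.toSubmodule) {x : L} (hxV : x ∈ V) (hx : x ∈ J ⊔ J.map (φ : L →ₗ[R] L)) :
    x ∈ J := by
  obtain ⟨a, ha, _, ⟨j, -, rfl⟩, rfl⟩ := Submodule.mem_sup.1 hx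
  have hφj : φ j ∈ V := by
    simpa using V.sub_mem hxV (hJV ha)
  simpa [hdisj j hφj] using ha

theorem triSpan_eq_inf_lieSpan (hφ : ∀ x, φ (φ x) = φ x) (hsplit : ∀ f, ∃ v ∈ V, f - φ v ∈ V)
    (hdisj : ∀ f, φ f ∈ V → φ f = 0) {S : Set L} (hS : S ⊆ V) :
    V.triSpan φ S = V.toSubmodule ⊓ (lieSpan R L (S ∪ φ '' S)).toSubmodule := by
  have hle : V.triSpan φ S ≤ V.toSubmodule ⊓ (lieSpan R L (S ∪ φ '' S)).toSubmodule :=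
    triSpan_le (fun s hs => ⟨hS hs, subset_lieSpan (Or.inl hs)⟩)
      (isTriClosed_inf _ fun _ => LieHom.map_mem_lieSpan_union_image hφ)
  refine le_antisymm hle fun x ⟨hxV, hxI⟩ => ?_
  have hJ : V.IsTriClosed φ (V.triSpan φ S) := isTriClosed_triSpan S
  have hspan : lieSpan R L (S ∪ φ '' S) ≤ hJ.supMap hsplit := by
    refine lieSpan_le.mpr ?_
    rintro s (hs | ⟨t, ht, rfl⟩)
    · exact Submodule.mem_sup_left (subset_triSpan S hs)
    · exact Submodule.mem_sup_right ⟨t, subset_triSpan S ht, rfl⟩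
  exact mem_of_mem_sup_map hdisj (hle.trans inf_le_left) hxV
    (hspan hxI)

end LieIdeal

end TriIdeal

namespace FreeLieAlgebra

variable (R : Type*) [CommRing R]

theorem sub_mem_of_forall_of {X L : Type*} [LieRing L] [LieAlgebra R L]
    {g h : FreeLieAlgebra R X →ₗ⁅R⁆ L} {I : LieIdeal R L}
    (hgh : ∀ x, g (of R x) - h (of R x) ∈ I) (f : FreeLieAlgebra R X) : g f - h f ∈ I := by
  let q : L →ₗ⁅R⁆ L ⧸ I := { LieSubmodule.Quotient.mk' I with map_lie' := rfl }
  have hq : q.comp g = q.comp h :=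
    hom_ext fun x => (Submodule.Quotient.eq _).2 (hgh x)
  exact (Submodule.Quotient.eq _).1 (DFunLike.congr_fun hq f)

noncomputable def projLeft (X Y : Type*) :
    FreeLieAlgebra R (X ⊕ Y) →ₗ⁅R⁆ FreeLieAlgebra R (X ⊕ Y) :=
  lift R (Sum.elim (fun x => of R (Sum.inl x)) 0)

variable {R}

section ProjLeft

variable {X Y : Type*}

@[simp]
theorem projLeft_of_inl (x : X) :
    projLeft R X Y (of R (Sum.inl x)) = of R (Sum.inl x) :=
  lift_of_apply _ _

@[simp]
theorem projLeft_of_inr (y : Y) : projLeft R X Y (of R (Sum.inr y)) = 0 :=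
  lift_of_apply _ _

theorem projLeft_projLeft (f : FreeLieAlgebra R (X ⊕ Y)) :
    projLeft R X Y (projLeft R X Y f) = projLeft R X Y f := by
  have h : (projLeft R X Y).comp (projLeft R X Y) = projLeft R X Y :=
    hom_ext fun z => by cases z <;> simp
  exact DFunLike.congr_fun h f

theorem lieSpan_range_of_inr_eq_ker :
    lieSpan R _ (Set.range fun y : Y => of R (Sum.inr y)) = (projLeft R X Y).ker := by
  refine le_antisymm (lieSpan_le.mpr ?_) fun f hf => ?_
  · rintro _ ⟨y, rfl⟩
    simp
  · have hgen : ∀ z : X ⊕ Y, (LieHom.id : FreeLieAlgebra R (X ⊕ Y) →ₗ⁅R⁆ _) (of R z) -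
        projLeft R X Y (of R z) ∈
        lieSpan R (FreeLieAlgebra R (X ⊕ Y)) (Set.range fun y : Y => of R (Sum.inr y)) := by
      rintro (x | y)
      · simp
      · simpa using subset_lieSpan (Set.mem_range_self y)
    simpa [LieHom.mem_ker.1 hf] using sub_mem_of_forall_of R hgen f

end ProjLeft

section InrToInl

variable {X : Type*} {φ : FreeLieAlgebra R (X ⊕ X) →ₗ⁅R⁆ FreeLieAlgebra R (X ⊕ X)}

theorem map_map_of_inl_of_inr (hφl : ∀ x : X, φ (of R (Sum.inl x)) = of R (Sum.inl x))
    (hφr : ∀ x : X, φ (of R (Sum.inr x)) = of R (Sum.inl x)) (f : FreeLieAlgebra R (X ⊕ X)) :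
    φ (φ f) = φ f := by
  have h : φ.comp φ = φ := hom_ext fun z => by cases z <;> simp [hφl, hφr]
  exact DFunLike.congr_fun h f

theorem projLeft_map_of_inl_of_inr (hφl : ∀ x : X, φ (of R (Sum.inl x)) = of R (Sum.inl x))
    (hφr : ∀ x : X, φ (of R (Sum.inr x)) = of R (Sum.inl x)) (f : FreeLieAlgebra R (X ⊕ X)) :
    projLeft R X X (φ f) = φ f := by
  have h : (projLeft R X X).comp φ = φ := hom_ext fun z => by cases z <;> simp [hφl, hφr]
  exact DFunLike.congr_fun h f

theorem exists_sub_map_mem_ker_projLeft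
    (hφr : ∀ x : X, φ (of R (Sum.inr x)) = of R (Sum.inl x)) (f : FreeLieAlgebra R (X ⊕ X)) :
    ∃ v ∈ (projLeft R X X).ker, f - φ v ∈ (projLeft R X X).ker := by
  let dot : FreeLieAlgebra R (X ⊕ X) →ₗ⁅R⁆ FreeLieAlgebra R (X ⊕ X) :=
    lift R (Sum.elim (fun x => of R (Sum.inr x)) 0)
  have hdot : φ.comp dot = projLeft R X X := hom_ext fun z => by
    cases z <;> simp [dot, hφr]
  have hdot_ker : (projLeft R X X).comp dot = 0 := hom_ext fun z => by
    cases z <;> simp [dot]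
  refine ⟨dot f, LieHom.mem_ker.2 (DFunLike.congr_fun hdot_ker f), ?_⟩
  rw [← LieHom.comp_apply, hdot, LieHom.mem_ker, map_sub, projLeft_projLeft, sub_self]

theorem eq_zero_of_map_mem_ker_projLeft
    (hφl : ∀ x : X, φ (of R (Sum.inl x)) = of R (Sum.inl x))
    (hφr : ∀ x : X, φ (of R (Sum.inr x)) = of R (Sum.inl x)) (f : FreeLieAlgebra R (X ⊕ X))
    (hf : φ f ∈ (projLeft R X X).ker) : φ f = 0 := by
  rw [← projLeft_map_of_inl_of_inr hφl hφr]
  exact LieHom.mem_ker.1 hf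

end InrToInl

end FreeLieAlgebra

open FreeLieAlgebra in
/-- For a subset `S` of the free Lie tri-algebra `V` (the Lie ideal of
`FreeLieAlgebra k (X ⊕ X)` generated by the dotted generators), the tri-algebra ideal of `V`
generated by `S` equals `V ∩ (S ∪ φ(S))`, the intersection of `V` with the Lie ideal of the
ambient free Lie algebra generated by `S ∪ φ(S)`. -/
theorem trialgebra_ideal_eq_inter (k : Type*) [Field k] (X : Type*)
    (φ : FreeLieAlgebra k (X ⊕ X) →ₗ⁅k⁆ FreeLieAlgebra k (X ⊕ X))
    (hφl : ∀ x : X, φ (FreeLieAlgebra.of k (Sum.inl x)) = FreeLieAlgebra.of k (Sum.inl x))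
    (hφr : ∀ x : X, φ (FreeLieAlgebra.of k (Sum.inr x)) = FreeLieAlgebra.of k (Sum.inl x))
    (V : LieIdeal k (FreeLieAlgebra k (X ⊕ X)))
    (hV : V = LieSubmodule.lieSpan k (FreeLieAlgebra k (X ⊕ X))
        (Set.range fun x : X => FreeLieAlgebra.of k (Sum.inr x)))
    (S : Set (FreeLieAlgebra k (X ⊕ X))) (hS : S ⊆ (V : Set (FreeLieAlgebra k (X ⊕ X)))) :
    sInf {J : Submodule k (FreeLieAlgebra k (X ⊕ X)) |
        S ⊆ (J : Set (FreeLieAlgebra k (X ⊕ X))) ∧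
        ∀ j ∈ J, ∀ v ∈ V, ⁅φ v, j⁆ ∈ J ∧ ⁅j, φ v⁆ ∈ J ∧ ⁅v, φ j⁆ ∈ J ∧
          ⁅φ j, v⁆ ∈ J ∧ ⁅v, j⁆ ∈ J ∧ ⁅j, v⁆ ∈ J} =
      LieSubmodule.toSubmodule V ⊓
        LieSubmodule.toSubmodule
          (LieSubmodule.lieSpan k (FreeLieAlgebra k (X ⊕ X)) (S ∪ φ '' S)) := by
  rw [lieSpan_range_of_inr_eq_ker] at hV
  subst hV
  exact LieIdeal.triSpan_eq_inf_lieSpan (map_map_of_inl_of_inr hφl hφr)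
    (exists_sub_map_mem_ker_projLeft hφr) (eq_zero_of_map_mem_ker_projLeft hφl hφr) hS
end

section
/- Let k be a field and X a type; in F := FreeAlgebra k (X ⊕ X), with plain generators x̄ and dotted generators ẋ, let φ : F → F be the unique algebra homomorphism with φ(x̄) = x̄ and φ(ẋ) = x̄, and let V be the two-sided ideal of F generated by {ẋ : x ∈ X}. Let S be a subset of V, and let J be the smallest k-submodule of F containing S such that for all j ∈ J and v ∈ V one has φ(v)·j ∈ J, j·φ(v) ∈ J, v·φ(j) ∈ J, φ(j)·v ∈ J, v·j ∈ J, and j·v ∈ J. Then J equals the intersection (as submodules of F) of V with the two-sided ideal of F generated by the set S ∪ φ(S). -/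
/-!
Let `p` be the endomorphism of `FreeAlgebra k (X ⊕ X)` killing the dotted generators. It is
idempotent, its kernel is `V`, and `p ∘ φ = φ`. Since every plain generator is `φ` of a dotted
one, a tri-algebra ideal `J` containing `S` absorbs every generator on both sides, hence is a
two-sided ideal of the whole free algebra. For `g` in the ideal generated by `S ∪ φ(S)` we get
`g - p g ∈ J`: on `a s b` with `s ∈ S` this difference is `a s b` itself, and on `a φ(s) b` it
is `(a - p a) φ(s) b + p a φ(s) (b - p b)`, where `a - p a, b - p b ∈ V` are absorbed by `φ(s)`
through the tri-algebra operations. If moreover `g ∈ V`, then `p g = 0` and so `g ∈ J`.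
Conversely, `V` meets that ideal in a tri-algebra ideal because `φ` is idempotent.
-/

namespace TwoSidedIdeal

variable {R : Type*} [Ring R]

open Pointwise in
theorem span_subset_of_mul_mul_mem {T : Set R} {K : AddSubgroup R}
    (h : ∀ a b, ∀ t ∈ T, a * t * b ∈ K) : (span T : Set R) ⊆ K := by
  intro g hg
  rw [SetLike.mem_coe, mem_span_iff_mem_addSubgroup_closure] at hg
  refine (AddSubgroup.closure_le K).2 ?_ hg
  rintro _ ⟨_, ⟨a, -, t, ht, rfl⟩, b, -, rfl⟩
  exact h a b t ht

theorem ker_inf_span_union_le {p : R →+* R} (hp : ∀ a, p (p a) = p a) {J : TwoSidedIdeal R}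
    {S T : Set R} (hSJ : S ⊆ J) (hSp : S ⊆ ker p) (hTp : ∀ t ∈ T, p t = t)
    (hTJ : ∀ t ∈ T, ∀ v ∈ ker p, v * t ∈ J ∧ t * v ∈ J) :
    ker p ⊓ span (S ∪ T) ≤ J := by
  have hsub : ∀ a, a - p a ∈ ker p := fun a => by rw [mem_ker, map_sub, hp, sub_self]
  let K := J.asIdeal.toAddSubgroup.comap (AddMonoidHom.id R - p.toAddMonoidHom)
  have hK : ∀ g, g ∈ K ↔ g - p g ∈ J := fun g => by simp [K]
  have hspan : (span (S ∪ T) : Set R) ⊆ K := by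
    refine span_subset_of_mul_mul_mem fun a b t ht => (hK _).2 ?_
    rcases ht with hs | ht
    · have hps : p t = 0 := (mem_ker p).1 (hSp hs)
      rw [map_mul, map_mul, hps, mul_zero, zero_mul, sub_zero]
      exact J.mul_mem_right _ _ (J.mul_mem_left _ _ (hSJ hs))
    · have hsplit : a * t * b - p (a * t * b) = (a - p a) * t * b + p a * (t * (b - p b)) := by
        rw [map_mul, map_mul, hTp t ht]; noncomm_ring
      rw [hsplit]
      exact J.add_mem (J.mul_mem_right _ _ (hTJ t ht _ (hsub a)).1)
        (J.mul_mem_left _ _ (hTJ t ht _ (hsub b)).2)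
  intro f hf
  rw [mem_inf, mem_ker] at hf
  simpa [hf.1] using (hK f).1 (hspan hf.2)

theorem map_mem_span_union_image {φ : R →+* R} (hφ : ∀ a, φ (φ a) = φ a) {S : Set R} {x : R}
    (hx : x ∈ span (S ∪ φ '' S)) : φ x ∈ span (S ∪ φ '' S) := by
  refine (mem_comap φ).1 (mem_span_iff.1 hx (comap φ (span (S ∪ φ '' S))) ?_)
  rintro _ (hs | ⟨s, hs, rfl⟩) <;> rw [SetLike.mem_coe, mem_comap]
  · exact subset_span (Or.inr ⟨_, hs, rfl⟩)
  · rw [hφ]; exact subset_span (Or.inr ⟨s, hs, rfl⟩)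

end TwoSidedIdeal

/-- Closure of `J` under `v ⊢ j`, `j ⊣ v`, `v ⊣ j`, `j ⊢ v`, `v ⊥ j`, `j ⊥ v` for `v ∈ V`, where
`a ⊢ b = φ a * b`, `a ⊣ b = a * φ b` and `a ⊥ b = a * b`. -/
def IsTrialgebraIdeal {k A : Type*} [CommRing k] [Ring A] [Algebra k A] (φ : A →ₐ[k] A)
    (V : TwoSidedIdeal A) (J : Submodule k A) : Prop :=
  ∀ j ∈ J, ∀ v ∈ V, φ v * j ∈ J ∧ j * φ v ∈ J ∧ v * φ j ∈ J ∧ φ j * v ∈ J ∧ v * j ∈ J ∧ j * v ∈ J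

theorem isTrialgebraIdeal_inf {k A : Type*} [CommRing k] [Ring A] [Algebra k A]
    {φ : A →ₐ[k] A} (V : TwoSidedIdeal A) {I : TwoSidedIdeal A} (hI : ∀ x ∈ I, φ x ∈ I) :
    IsTrialgebraIdeal φ V ((V ⊓ I).asIdeal.restrictScalars k) := by
  intro j hj v hv
  simp only [Submodule.restrictScalars_mem, TwoSidedIdeal.mem_asIdeal,
    TwoSidedIdeal.mem_inf] at hj ⊢
  obtain ⟨hjV, hjI⟩ := hj
  exact ⟨⟨V.mul_mem_left _ _ hjV, I.mul_mem_left _ _ hjI⟩,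
    ⟨V.mul_mem_right _ _ hjV, I.mul_mem_right _ _ hjI⟩,
    ⟨V.mul_mem_right _ _ hv, I.mul_mem_left _ _ (hI j hjI)⟩,
    ⟨V.mul_mem_left _ _ hv, I.mul_mem_right _ _ (hI j hjI)⟩,
    ⟨V.mul_mem_left _ _ hjV, I.mul_mem_left _ _ hjI⟩,
    ⟨V.mul_mem_right _ _ hjV, I.mul_mem_right _ _ hjI⟩⟩

namespace FreeAlgebra

section

variable {R X : Type*} [CommSemiring R] {J : Submodule R (FreeAlgebra R X)}

theorem mul_mem_of_forall_ι_mul_mem (h : ∀ x, ∀ j ∈ J, ι R x * j ∈ J) (a : FreeAlgebra R X)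
    {j : FreeAlgebra R X} (hj : j ∈ J) : a * j ∈ J := by
  induction a using FreeAlgebra.induction generalizing j with
  | grade0 r => rw [← Algebra.smul_def]; exact J.smul_mem r hj
  | grade1 x => exact h x j hj
  | mul a b ha hb => rw [mul_assoc]; exact ha (hb hj)
  | add a b ha hb => rw [add_mul]; exact J.add_mem (ha hj) (hb hj)

theorem mul_mem_of_forall_mul_ι_mem (h : ∀ x, ∀ j ∈ J, j * ι R x ∈ J) (a : FreeAlgebra R X)
    {j : FreeAlgebra R X} (hj : j ∈ J) : j * a ∈ J := by
  induction a using FreeAlgebra.induction generalizing j with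
  | grade0 r => rw [← Algebra.commutes, ← Algebra.smul_def]; exact J.smul_mem r hj
  | grade1 x => exact h x j hj
  | mul a b ha hb => rw [← mul_assoc]; exact hb (ha hj)
  | add a b ha hb => rw [mul_add]; exact J.add_mem (ha hj) (hb hj)

end

variable (k X : Type*) [CommRing k]

noncomputable def killDotted : FreeAlgebra k (X ⊕ X) →ₐ[k] FreeAlgebra k (X ⊕ X) :=
  lift k (Sum.elim (fun x => ι k (Sum.inl x)) 0)

noncomputable def collapse : FreeAlgebra k (X ⊕ X) →ₐ[k] FreeAlgebra k (X ⊕ X) :=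
  lift k fun x => ι k (Sum.inl (Sum.elim id id x))

variable {k X}

@[simp]
theorem killDotted_ι_inl (x : X) : killDotted k X (ι k (Sum.inl x)) = ι k (Sum.inl x) :=
  lift_ι_apply _ _

@[simp]
theorem killDotted_ι_inr (x : X) : killDotted k X (ι k (Sum.inr x)) = 0 :=
  lift_ι_apply _ _

@[simp]
theorem collapse_ι (x : X ⊕ X) : collapse k X (ι k x) = ι k (Sum.inl (Sum.elim id id x)) :=
  lift_ι_apply _ _

theorem eq_collapse {φ : FreeAlgebra k (X ⊕ X) →ₐ[k] FreeAlgebra k (X ⊕ X)}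
    (hφl : ∀ x : X, φ (ι k (Sum.inl x)) = ι k (Sum.inl x))
    (hφr : ∀ x : X, φ (ι k (Sum.inr x)) = ι k (Sum.inl x)) : φ = collapse k X := by
  ext (x | x) <;> simp [hφl, hφr]

theorem killDotted_killDotted (a : FreeAlgebra k (X ⊕ X)) :
    killDotted k X (killDotted k X a) = killDotted k X a := by
  rw [← AlgHom.comp_apply]
  congr 1
  ext (x | x) <;> simp

theorem killDotted_collapse (a : FreeAlgebra k (X ⊕ X)) :
    killDotted k X (collapse k X a) = collapse k X a := by
  rw [← AlgHom.comp_apply]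
  congr 1
  ext (x | x) <;> simp

theorem collapse_collapse (a : FreeAlgebra k (X ⊕ X)) :
    collapse k X (collapse k X a) = collapse k X a := by
  rw [← AlgHom.comp_apply]
  congr 1
  ext (x | x) <;> simp

theorem ι_inr_mem_ker_killDotted (x : X) : ι k (Sum.inr x) ∈ TwoSidedIdeal.ker (killDotted k X) :=
  (TwoSidedIdeal.mem_ker _).2 (killDotted_ι_inr x)

theorem sub_killDotted_mem_span (a : FreeAlgebra k (X ⊕ X)) :
    a - killDotted k X a ∈ TwoSidedIdeal.span (Set.range fun x : X => ι k (Sum.inr x)) := by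
  set V := TwoSidedIdeal.span (Set.range fun x : X => ι k (Sum.inr x))
  induction a using FreeAlgebra.induction with
  | grade0 r => rw [AlgHom.commutes, sub_self]; exact V.zero_mem
  | grade1 x =>
    rcases x with x | x
    · rw [killDotted_ι_inl, sub_self]; exact V.zero_mem
    · rw [killDotted_ι_inr, sub_zero]; exact TwoSidedIdeal.subset_span ⟨x, rfl⟩
  | mul a b ha hb =>
    have hsplit : a * b - killDotted k X (a * b) =
        a * (b - killDotted k X b) + (a - killDotted k X a) * killDotted k X b := by
      rw [map_mul]; noncomm_ring
    rw [hsplit]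
    exact V.add_mem (V.mul_mem_left _ _ hb) (V.mul_mem_right _ _ ha)
  | add a b ha hb =>
    rw [map_add, add_sub_add_comm]
    exact V.add_mem ha hb

theorem ker_killDotted : TwoSidedIdeal.ker (killDotted k X) =
    TwoSidedIdeal.span (Set.range fun x : X => ι k (Sum.inr x)) := by
  refine le_antisymm (fun a ha => ?_) (TwoSidedIdeal.span_le.2 ?_)
  · simpa [(TwoSidedIdeal.mem_ker _).1 ha] using sub_killDotted_mem_span a
  · rintro _ ⟨x, rfl⟩
    exact ι_inr_mem_ker_killDotted x

theorem mem_of_mem_ker_killDotted_inf_span {S : Set (FreeAlgebra k (X ⊕ X))}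
    {J : Submodule k (FreeAlgebra k (X ⊕ X))} (hSJ : S ⊆ J)
    (hSV : S ⊆ TwoSidedIdeal.ker (killDotted k X))
    (hJ : IsTrialgebraIdeal (collapse k X) (TwoSidedIdeal.ker (killDotted k X)) J)
    {f : FreeAlgebra k (X ⊕ X)}
    (hf : f ∈ TwoSidedIdeal.ker (killDotted k X) ⊓ TwoSidedIdeal.span (S ∪ collapse k X '' S)) :
    f ∈ J := by
  -- a plain generator is the collapse of a dotted one, so `J` absorbs all generators
  have hleft : ∀ x, ∀ j ∈ J, ι k x * j ∈ J := by
    rintro (x | x) j hj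
    · simpa using (hJ j hj _ (ι_inr_mem_ker_killDotted x)).1
    · exact (hJ j hj _ (ι_inr_mem_ker_killDotted x)).2.2.2.2.1
  have hright : ∀ x, ∀ j ∈ J, j * ι k x ∈ J := by
    rintro (x | x) j hj
    · simpa using (hJ j hj _ (ι_inr_mem_ker_killDotted x)).2.1
    · exact (hJ j hj _ (ι_inr_mem_ker_killDotted x)).2.2.2.2.2
  let J' : TwoSidedIdeal (FreeAlgebra k (X ⊕ X)) := .mk' J J.zero_mem J.add_mem J.neg_mem
    (mul_mem_of_forall_ι_mul_mem hleft _) (mul_mem_of_forall_mul_ι_mem hright _)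
  have hJ' : ∀ a, a ∈ J' ↔ a ∈ J := TwoSidedIdeal.mem_mk' _ _ _ _ _ _
  refine (hJ' f).1 (TwoSidedIdeal.ker_inf_span_union_le (p := (killDotted k X).toRingHom)
    killDotted_killDotted (fun s hs => (hJ' s).2 (hSJ hs)) hSV ?_ ?_ hf)
  · rintro _ ⟨s, -, rfl⟩
    exact killDotted_collapse s
  · rintro _ ⟨s, hs, rfl⟩ v hv
    exact ⟨(hJ' _).2 (hJ s (hSJ hs) v hv).2.2.1, (hJ' _).2 (hJ s (hSJ hs) v hv).2.2.2.1⟩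

end FreeAlgebra

open FreeAlgebra in
/-- For a subset `S` of the free associative tri-algebra `V` (the two-sided ideal
of `FreeAlgebra k (X ⊕ X)` generated by the dotted generators), the tri-algebra ideal of `V`
generated by `S` equals the intersection of `V` with the two-sided ideal of the ambient free
algebra generated by `S ∪ φ(S)`. -/
theorem assoc_trialgebra_ideal_eq_inter (k : Type*) [Field k] (X : Type*)
    (φ : FreeAlgebra k (X ⊕ X) →ₐ[k] FreeAlgebra k (X ⊕ X))
    (hφl : ∀ x : X, φ (FreeAlgebra.ι k (Sum.inl x)) = FreeAlgebra.ι k (Sum.inl x))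
    (hφr : ∀ x : X, φ (FreeAlgebra.ι k (Sum.inr x)) = FreeAlgebra.ι k (Sum.inl x))
    (V : TwoSidedIdeal (FreeAlgebra k (X ⊕ X)))
    (hV : V = TwoSidedIdeal.span (Set.range fun x : X => FreeAlgebra.ι k (Sum.inr x : X ⊕ X)))
    (S : Set (FreeAlgebra k (X ⊕ X))) (hS : S ⊆ (V : Set (FreeAlgebra k (X ⊕ X)))) :
    ((sInf {J : Submodule k (FreeAlgebra k (X ⊕ X)) |
        S ⊆ (J : Set (FreeAlgebra k (X ⊕ X))) ∧
        ∀ j ∈ J, ∀ v ∈ V, φ v * j ∈ J ∧ j * φ v ∈ J ∧ v * φ j ∈ J ∧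
          φ j * v ∈ J ∧ v * j ∈ J ∧ j * v ∈ J} :
        Submodule k (FreeAlgebra k (X ⊕ X))) : Set (FreeAlgebra k (X ⊕ X))) =
      (V : Set (FreeAlgebra k (X ⊕ X))) ∩
        ((TwoSidedIdeal.span (S ∪ φ '' S)) : Set (FreeAlgebra k (X ⊕ X))) := by
  obtain rfl := eq_collapse hφl hφr
  rw [← ker_killDotted] at hV
  subst hV
  ext f
  constructor
  · intro hf
    refine Submodule.mem_sInf.1 hf _ ⟨fun s hs => ?_, isTrialgebraIdeal_inf _
      fun x => TwoSidedIdeal.map_mem_span_union_image (φ := (collapse k X).toRingHom)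
        collapse_collapse⟩
    simpa using ⟨hS hs, TwoSidedIdeal.subset_span (Or.inl hs)⟩
  · intro hf
    exact Submodule.mem_sInf.2 fun J hJ =>
      mem_of_mem_ker_killDotted_inf_span hJ.1 hS hJ.2 ((TwoSidedIdeal.mem_inf _).2 hf)
end

section
/- Let R be a commutative ring, let F and A be Lie algebras over R, let φ : F → F be a Lie algebra homomorphism with φ ∘ φ = φ, and let θ : F → A be a Lie algebra homomorphism. Define ψ : F → A × A by ψ(f) = (θ(φ f), θ f). Equip A × A with the operations (u,v) ⊢ (u',v') := (⁅u,u'⁆, ⁅u,v'⁆), (u,v) ⊣ (u',v') := (⁅u,u'⁆, ⁅v,u'⁆), (u,v) ⊥ (u',v') := (⁅u,u'⁆, ⁅v,v'⁆). Then for all f, g ∈ F: ψ(⁅φ(f), g⁆) = ψ(f) ⊢ ψ(g), ψ(⁅f, φ(g)⁆) = ψ(f) ⊣ ψ(g), and ψ(⁅f, g⁆) = ψ(f) ⊥ ψ(g). -/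
namespace LieHom

variable {R L : Type*} [CommRing R] [LieRing L] [LieAlgebra R L]

theorem map_lie_map_left {φ : L →ₗ⁅R⁆ L} (hφ : ∀ x, φ (φ x) = φ x) (x y : L) :
    φ ⁅φ x, y⁆ = ⁅φ x, φ y⁆ := by
  rw [φ.map_lie, hφ]

theorem map_lie_map_right {φ : L →ₗ⁅R⁆ L} (hφ : ∀ x, φ (φ x) = φ x) (x y : L) :
    φ ⁅x, φ y⁆ = ⁅φ x, φ y⁆ := by
  rw [φ.map_lie, hφ]

end LieHom

/-- If `φ` is a homomorphic averaging operator on a Lie algebra `F` and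
`θ : F → A` is a Lie algebra homomorphism, then `ψ : f ↦ (θ (φ f), θ f)` is a homomorphism of
tri-algebras from `F` (with operations `⁅φ ·, ·⁆`, `⁅·, φ ·⁆`, `⁅·, ·⁆`) to `C₂ ⊗ A ≃ A × A`
(with the product tri-algebra operations). -/
theorem psi_trialgebra_hom_lie (R : Type*) [CommRing R] (F A : Type*)
    [LieRing F] [LieAlgebra R F] [LieRing A] [LieAlgebra R A]
    (φ : F →ₗ⁅R⁆ F) (hφ : ∀ f : F, φ (φ f) = φ f) (θ : F →ₗ⁅R⁆ A) :
    ∀ f g : F,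
      ((θ (φ ⁅φ f, g⁆), θ ⁅φ f, g⁆) : A × A) = (⁅θ (φ f), θ (φ g)⁆, ⁅θ (φ f), θ g⁆) ∧
      ((θ (φ ⁅f, φ g⁆), θ ⁅f, φ g⁆) : A × A) = (⁅θ (φ f), θ (φ g)⁆, ⁅θ f, θ (φ g)⁆) ∧
      ((θ (φ ⁅f, g⁆), θ ⁅f, g⁆) : A × A) = (⁅θ (φ f), θ (φ g)⁆, ⁅θ f, θ g⁆) := by
  intro f g
  rw [LieHom.map_lie_map_left hφ, LieHom.map_lie_map_right hφ, φ.map_lie]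
  simp only [LieHom.map_lie, and_self]
end

section
/- Let k be a field and X a type; let F := FreeLieAlgebra k (X ⊕ X), let j : FreeLieAlgebra k X → F be the Lie algebra homomorphism induced by x ↦ ι(Sum.inl x), and let V be the Lie ideal of F generated by the dotted generators {ι(Sum.inr x) : x ∈ X}. Then the range of j and the underlying submodule of V are complementary submodules of F: their intersection is trivial and their sum is all of F. -/
/-!
Killing the dotted generators gives a Lie algebra retraction `π : F → FreeLieAlgebra k X` of `j`
whose kernel contains `V`, so `range j` meets `V` trivially. Conversely, the sum of a Lie
subalgebra and a Lie ideal is again a Lie subalgebra; `range j + V` contains every generator of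
`F`, hence is all of `F`.
-/

open Function

theorem LinearMap.disjoint_range_ker_of_leftInverse {R M N : Type*} [Ring R] [AddCommGroup M]
    [AddCommGroup N] [Module R M] [Module R N] {f : M →ₗ[R] N} {g : N →ₗ[R] M}
    (h : LeftInverse g f) : Disjoint (range f) (ker g) := by
  rw [Submodule.disjoint_def]
  rintro _ ⟨a, rfl⟩ hg
  rw [mem_ker, h a] at hg
  rw [hg, map_zero]

namespace LieSubalgebra

variable {R L : Type*} [CommRing R] [LieRing L] [LieAlgebra R L]

def supLieIdeal (K : LieSubalgebra R L) (I : LieIdeal R L) : LieSubalgebra R L :=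
  { (K : Submodule R L) ⊔ LieSubmodule.toSubmodule I with
    lie_mem' := by
      intro x y hx hy
      obtain ⟨a, ha, v, hv, rfl⟩ := Submodule.mem_sup.mp hx
      obtain ⟨b, hb, w, hw, rfl⟩ := Submodule.mem_sup.mp hy
      rw [add_lie, lie_add, add_assoc]
      exact Submodule.add_mem_sup (K.lie_mem ha hb)
        (add_mem (lie_mem_right R L I _ _ hw) (lie_mem_left R L I _ _ hv)) }

theorem toSubmodule_supLieIdeal (K : LieSubalgebra R L) (I : LieIdeal R L) :
    (K.supLieIdeal I : Submodule R L) = (K : Submodule R L) ⊔ LieSubmodule.toSubmodule I :=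
  rfl

end LieSubalgebra

namespace FreeLieAlgebra

variable (R X : Type*) [CommRing R]

theorem lieSpan_range_of :
    LieSubalgebra.lieSpan R (FreeLieAlgebra R X) (Set.range (of R)) = ⊤ := by
  set K := LieSubalgebra.lieSpan R (FreeLieAlgebra R X) (Set.range (of R))
  let g : FreeLieAlgebra R X →ₗ⁅R⁆ K :=
    lift R fun x => ⟨of R x, LieSubalgebra.subset_lieSpan ⟨x, rfl⟩⟩
  have hg : K.incl.comp g = LieHom.id := hom_ext fun x => by simp [g]
  refine eq_top_iff.mpr fun a _ => ?_
  rw [← LieHom.id_apply (R := R) a, ← hg]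
  exact (g a).2

end FreeLieAlgebra

/-- In `F = FreeLieAlgebra k (X ⊕ X)`, the range of the canonical embedding
`j : FreeLieAlgebra k X → F` (induced by the plain generators) and the Lie ideal `V` generated by
the dotted generators are complementary submodules: trivial intersection and full sum. -/
theorem plain_range_compl_dotted_ideal (k : Type*) [Field k] (X : Type*)
    (j : FreeLieAlgebra k X →ₗ⁅k⁆ FreeLieAlgebra k (X ⊕ X))
    (hj : j = FreeLieAlgebra.lift k fun x : X => FreeLieAlgebra.of k (Sum.inl x))
    (V : LieIdeal k (FreeLieAlgebra k (X ⊕ X)))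
    (hV : V = LieSubmodule.lieSpan k (FreeLieAlgebra k (X ⊕ X))
        (Set.range fun x : X => FreeLieAlgebra.of k (Sum.inr x))) :
    LinearMap.range j.toLinearMap ⊓ LieSubmodule.toSubmodule V = ⊥ ∧
    LinearMap.range j.toLinearMap ⊔ LieSubmodule.toSubmodule V = ⊤ := by
  let π : FreeLieAlgebra k (X ⊕ X) →ₗ⁅k⁆ FreeLieAlgebra k X :=
    FreeLieAlgebra.lift k (Sum.elim (FreeLieAlgebra.of k) 0)
  have hπj : LeftInverse π j := by
    have : π.comp j = LieHom.id := FreeLieAlgebra.hom_ext fun x => by simp [π, hj]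
    exact LieHom.congr_fun this
  have hVπ : V ≤ π.ker := by
    rw [hV, LieSubmodule.lieSpan_le]
    rintro _ ⟨x, rfl⟩
    simp [π]
  constructor
  · refine disjoint_iff.mp ((LinearMap.disjoint_range_ker_of_leftInverse hπj).mono_right ?_)
    rwa [← LieHom.ker_toSubmodule, LieSubmodule.toSubmodule_le_toSubmodule]
  · rw [← LieHom.range_toSubmodule, ← LieSubalgebra.toSubmodule_supLieIdeal,
      ← LieSubalgebra.top_toSubmodule, LieSubalgebra.toSubmodule_inj, eq_top_iff,
      ← FreeLieAlgebra.lieSpan_range_of, LieSubalgebra.lieSpan_le]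
    rintro _ ⟨x | x, rfl⟩
    · exact Submodule.mem_sup_left ⟨FreeLieAlgebra.of k x, by simp [hj]⟩
    · exact Submodule.mem_sup_right (hV ▸ LieSubmodule.subset_lieSpan ⟨x, rfl⟩)
end

section
/- Let k be a field and X a type; let F := FreeLieAlgebra k (X ⊕ X) and let p : F → FreeLieAlgebra k X be the Lie algebra homomorphism determined by p(ι(Sum.inl x)) = ι(x) and p(ι(Sum.inr x)) = 0 for all x ∈ X. Then the Lie ideal of F generated by the dotted generators {ι(Sum.inr x) : x ∈ X} equals the kernel of p. -/
/-!
The ideal `I` generated by the dotted generators is killed by `p`. Conversely, the quotient map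
`F → F ⧸ I` factors through `p`, via the map `FreeLieAlgebra k X → F ⧸ I` sending `x` to the
class of `x̄`: both composites agree on plain generators, and on dotted ones because `ẋ ∈ I`.
Hence `ker p ⊆ I`.
-/

namespace LieIdeal

variable {R L : Type*} [CommRing R] [LieRing L] [LieAlgebra R L]

def quotientMk (I : LieIdeal R L) : L →ₗ⁅R⁆ L ⧸ I :=
  { (LieSubmodule.Quotient.mk' I : L →ₗ[R] L ⧸ I) with map_lie' := rfl }

@[simp]
theorem quotientMk_apply (I : LieIdeal R L) (x : L) :
    I.quotientMk x = LieSubmodule.Quotient.mk' I x :=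
  rfl

@[simp]
theorem ker_quotientMk (I : LieIdeal R L) : I.quotientMk.ker = I := by
  ext x
  simp

end LieIdeal

namespace LieHom

variable {R L M : Type*} [CommRing R] [LieRing L] [LieAlgebra R L] [LieRing M] [LieAlgebra R M]

theorem ker_eq_of_comp_eq_quotientMk (f : L →ₗ⁅R⁆ M) {I : LieIdeal R L} (hI : I ≤ f.ker)
    (g : M →ₗ⁅R⁆ L ⧸ I) (hg : g.comp f = I.quotientMk) : f.ker = I := by
  refine le_antisymm (fun x hx => ?_) hI
  have hx : f x = 0 := hx
  rw [← I.ker_quotientMk, LieHom.mem_ker, ← hg, LieHom.comp_apply, hx, map_zero]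

end LieHom

/-- The Lie ideal of `FreeLieAlgebra k (X ⊕ X)` generated by the dotted
generators equals the kernel of the homomorphism `p` sending plain generators to generators and
dotted generators to `0`. -/
theorem dotted_ideal_eq_ker (k : Type*) [Field k] (X : Type*)
    (p : FreeLieAlgebra k (X ⊕ X) →ₗ⁅k⁆ FreeLieAlgebra k X)
    (hpl : ∀ x : X, p (FreeLieAlgebra.of k (Sum.inl x)) = FreeLieAlgebra.of k x)
    (hpr : ∀ x : X, p (FreeLieAlgebra.of k (Sum.inr x)) = 0) :
    LieSubmodule.lieSpan k (FreeLieAlgebra k (X ⊕ X))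
        (Set.range fun x : X => FreeLieAlgebra.of k (Sum.inr x)) =
      p.ker := by
  set I : LieIdeal k (FreeLieAlgebra k (X ⊕ X)) :=
    LieSubmodule.lieSpan k (FreeLieAlgebra k (X ⊕ X))
      (Set.range fun x : X => FreeLieAlgebra.of k (Sum.inr x))
  have hI : I ≤ p.ker := by
    rw [LieSubmodule.lieSpan_le]
    rintro _ ⟨x, rfl⟩
    exact hpr x
  let g := FreeLieAlgebra.lift k fun x : X => I.quotientMk (FreeLieAlgebra.of k (Sum.inl x))
  have hg : g.comp p = I.quotientMk := by
    refine FreeLieAlgebra.hom_ext fun v => ?_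
    rcases v with x | x
    · simp [g, hpl]
    · rw [LieHom.comp_apply, hpr, map_zero, eq_comm, ← LieHom.mem_ker, I.ker_quotientMk]
      exact LieSubmodule.subset_lieSpan ⟨x, rfl⟩
  exact (p.ker_eq_of_comp_eq_quotientMk hI g hg).symm
end

section
/- Let k be a field and X a type; in F := FreeLieAlgebra k (X ⊕ X), let φ : F → F be the unique Lie algebra homomorphism with φ(ι(Sum.inl x)) = ι(Sum.inl x) and φ(ι(Sum.inr x)) = ι(Sum.inl x), let j : FreeLieAlgebra k X → F be the Lie algebra homomorphism induced by x ↦ ι(Sum.inl x), and let V be the Lie ideal of F generated by the dotted generators {ι(Sum.inr x) : x ∈ X}. Then the image of the submodule V under φ equals the range of j. -/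
/-!
Collapsing the two copies of `X` gives `π : F → FreeLieAlgebra k X` with `φ = j ∘ π`, so
`φ(V) ⊆ range j`. Conversely `j = φ ∘ j'`, where `j'` sends `x` to the dotted generator `ẋ`;
since `V` is a Lie subalgebra containing every `ẋ`, the range of `j'` lies in `V`, whence
`range j ⊆ φ(V)`.
-/

namespace FreeLieAlgebra

variable {R X L : Type*} [CommRing R] [LieRing L] [LieAlgebra R L]

theorem lift_apply_mem {f : X → L} {K : LieSubalgebra R L} (hf : ∀ x, f x ∈ K)
    (y : FreeLieAlgebra R X) : lift R f y ∈ K := by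
  set g : FreeLieAlgebra R X →ₗ⁅R⁆ K := lift R fun x => ⟨f x, hf x⟩
  have hincl : K.incl.comp g = lift R f := hom_ext fun x => by simp [g]
  rw [← hincl]
  exact (g y).2

end FreeLieAlgebra

/-- The image under `φ` of the Lie ideal `V` generated by the dotted generators
equals the range of the canonical embedding `j : FreeLieAlgebra k X → FreeLieAlgebra k (X ⊕ X)`. -/
theorem phi_image_dotted_ideal_eq_plain_range (k : Type*) [Field k] (X : Type*)
    (φ : FreeLieAlgebra k (X ⊕ X) →ₗ⁅k⁆ FreeLieAlgebra k (X ⊕ X))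
    (hφl : ∀ x : X, φ (FreeLieAlgebra.of k (Sum.inl x)) = FreeLieAlgebra.of k (Sum.inl x))
    (hφr : ∀ x : X, φ (FreeLieAlgebra.of k (Sum.inr x)) = FreeLieAlgebra.of k (Sum.inl x))
    (j : FreeLieAlgebra k X →ₗ⁅k⁆ FreeLieAlgebra k (X ⊕ X))
    (hj : j = FreeLieAlgebra.lift k fun x : X => FreeLieAlgebra.of k (Sum.inl x))
    (V : LieIdeal k (FreeLieAlgebra k (X ⊕ X)))
    (hV : V = LieSubmodule.lieSpan k (FreeLieAlgebra k (X ⊕ X))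
        (Set.range fun x : X => FreeLieAlgebra.of k (Sum.inr x))) :
    Submodule.map φ.toLinearMap (LieSubmodule.toSubmodule V) =
      LinearMap.range j.toLinearMap := by
  let π : FreeLieAlgebra k (X ⊕ X) →ₗ⁅k⁆ FreeLieAlgebra k X :=
    FreeLieAlgebra.lift k (Sum.elim (FreeLieAlgebra.of k) (FreeLieAlgebra.of k))
  let j' : FreeLieAlgebra k X →ₗ⁅k⁆ FreeLieAlgebra k (X ⊕ X) :=
    FreeLieAlgebra.lift k fun x => FreeLieAlgebra.of k (Sum.inr x)
  have hφ_eq : φ = j.comp π :=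
    FreeLieAlgebra.hom_ext <| by rintro (x | x) <;> simp [π, hj, hφl, hφr]
  have hj_eq : j = φ.comp j' := FreeLieAlgebra.hom_ext fun x => by simp [j', hj, hφr]
  have hj'_mem (y : FreeLieAlgebra k X) : j' y ∈ V :=
    FreeLieAlgebra.lift_apply_mem (K := V.toLieSubalgebra)
      (fun x => hV ▸ LieSubmodule.subset_lieSpan ⟨x, rfl⟩) y
  apply le_antisymm
  · rw [hφ_eq]
    exact LinearMap.map_le_range.trans (LinearMap.range_comp_le_range _ _)
  · rintro _ ⟨y, rfl⟩
    rw [hj_eq]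
    exact ⟨j' y, hj'_mem y, rfl⟩
end

section
/- Let k be a field and X a type; in F := FreeLieAlgebra k (X ⊕ X), with plain generators x̄ and dotted generators ẋ, let φ : F → F be the unique Lie algebra homomorphism with φ(x̄) = x̄ and φ(ẋ) = x̄, and let V₂ be the smallest k-submodule of F containing all ẋ and closed under the two di-algebra operations (for a, b ∈ V₂: ⁅φ(a), b⁆ ∈ V₂ and ⁅a, φ(b)⁆ ∈ V₂). Then V₂ equals the k-linear span of the left-normed elements w(x, l) := List.foldl (fun u y => ⁅u, ȳ⁆) ẋ l over all (x, l) ∈ X × List X; consequently, these elements form a k-basis of V₂. -/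
/-!
Write `V` for the span of the words. Since `⁅w(x, l), ȳ⁆ = w(x, l ++ [y])`, every plain generator
normalises `V`; the elements normalising a submodule form a Lie subalgebra, so it contains the
image of `φ`, which is generated by plain generators. Hence `V` is closed under both operations.
Conversely `w(x, l ++ [y]) = ⁅w(x, l), φ ẏ⁆` puts every word into every closed submodule.

For independence, let `F` act on `(X × List X →₀ k) × k`: `ẋ` sends `(f, c)` to
`(c • e(x, []), 0)` and `ȳ` appends `y` to the lists in the first component (with a sign). Then
`w(x, l)` sends `(0, 1)` to `e(x, l)`.
-/

open FreeLieAlgebra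

namespace Submodule

variable {R L : Type*} [CommRing R] [LieRing L] [LieAlgebra R L]

def lieNormalizer (W : Submodule R L) : LieSubalgebra R L where
  carrier := {c | ∀ a ∈ W, ⁅c, a⁆ ∈ W}
  add_mem' hc hd a ha := by rw [add_lie]; exact W.add_mem (hc a ha) (hd a ha)
  zero_mem' a _ := by rw [zero_lie]; exact W.zero_mem
  smul_mem' t _ hc a ha := by rw [smul_lie]; exact W.smul_mem t (hc a ha)
  lie_mem' hc hd a ha := by
    rw [lie_lie]; exact W.sub_mem (hc _ (hd a ha)) (hd _ (hc a ha))

theorem mem_lieNormalizer_span_iff {s : Set L} {c : L} :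
    c ∈ (span R s).lieNormalizer ↔ ∀ a ∈ s, ⁅c, a⁆ ∈ span R s := by
  refine ⟨fun hc a ha ↦ hc a (subset_span ha), fun h ↦ ?_⟩
  have : span R s ≤ (span R s).comap (LieAlgebra.ad R L c) := span_le.mpr h
  exact fun a ha ↦ this ha

end Submodule

namespace FreeLieAlgebra

variable {R X L : Type*} [CommRing R] [LieRing L] [LieAlgebra R L]

theorem apply_mem_of_forall_of_mem (f : FreeLieAlgebra R X →ₗ⁅R⁆ L) {K : LieSubalgebra R L}
    (hf : ∀ x, f (of R x) ∈ K) (a : FreeLieAlgebra R X) : f a ∈ K := by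
  let g : FreeLieAlgebra R X →ₗ⁅R⁆ K := lift R fun x ↦ ⟨f (of R x), hf x⟩
  have hg : K.incl.comp g = f := hom_ext fun x ↦ by simp [g]
  rw [← hg]
  exact (g a).2

end FreeLieAlgebra

section Words

variable (R X : Type*) [CommRing R]

noncomputable def leftNormedWord (p : X × List X) : FreeLieAlgebra R (X ⊕ X) :=
  p.2.foldl (fun u y ↦ ⁅u, of R (Sum.inl y)⁆) (of R (Sum.inr p.1))

variable {R X}

@[simp]
theorem leftNormedWord_nil (x : X) : leftNormedWord R X (x, []) = of R (Sum.inr x) :=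
  rfl

theorem leftNormedWord_append_singleton (x : X) (l : List X) (y : X) :
    leftNormedWord R X (x, l ++ [y]) = ⁅leftNormedWord R X (x, l), of R (Sum.inl y)⁆ := by
  simp [leftNormedWord]

end Words

section Representation

variable {R X : Type*} [CommRing R]

attribute [local instance] LieRing.ofAssociativeRing

local notation "M" => ((X × List X →₀ R) × R)

variable (R) in
noncomputable def wordEnd (p : X × List X) : Module.End R M :=
  LinearMap.inl R _ R ∘ₗ (LinearMap.snd R _ R).smulRight (Finsupp.single p 1)

variable (R) in
/-- Since `wordEnd R p ∘ₗ generatorEnd R (Sum.inl y) = 0`, the sign makes the bracket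
`⁅wordEnd R p, generatorEnd R (Sum.inl y)⁆` a `wordEnd` without a sign. -/
noncomputable def generatorEnd : X ⊕ X → Module.End R M
  | Sum.inl y => -(LinearMap.inl R _ R ∘ₗ
      Finsupp.lmapDomain R R (fun q : X × List X ↦ (q.1, q.2 ++ [y])) ∘ₗ LinearMap.fst R _ R)
  | Sum.inr x => wordEnd R (x, [])

theorem lie_wordEnd_generatorEnd_inl (x : X) (l : List X) (y : X) :
    ⁅wordEnd R (x, l), generatorEnd R (Sum.inl y)⁆ = wordEnd R (x, l ++ [y]) := by
  ext ⟨f, c⟩ <;> simp [wordEnd, generatorEnd, Finsupp.mapDomain_single]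

theorem lift_generatorEnd_leftNormedWord (p : X × List X) :
    lift R (generatorEnd R) (leftNormedWord R X p) = wordEnd R p := by
  obtain ⟨x, l⟩ := p
  induction l using List.reverseRecOn with
  | nil => simp [generatorEnd]
  | append_singleton l y ih =>
    rw [leftNormedWord_append_singleton, LieHom.map_lie, ih, lift_of_apply,
      lie_wordEnd_generatorEnd_inl]

theorem linearIndependent_leftNormedWord : LinearIndependent R (leftNormedWord R X) := by
  let coeff : FreeLieAlgebra R (X ⊕ X) →ₗ[R] X × List X →₀ R :=
    LinearMap.fst R _ R ∘ₗ LinearMap.applyₗ ((0, 1) : M) ∘ₗ (lift R (generatorEnd R)).toLinearMap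
  refine LinearIndependent.of_comp coeff ?_
  convert Finsupp.linearIndependent_single_one R (X × List X) using 1
  ext p : 1
  simp [coeff, lift_generatorEnd_leftNormedWord, wordEnd]

end Representation

section Span

variable {R X : Type*} [CommRing R]

theorem of_inl_mem_lieNormalizer_span_leftNormedWord (y : X) :
    of R (Sum.inl y) ∈ (Submodule.span R (Set.range (leftNormedWord R X))).lieNormalizer := by
  rw [Submodule.mem_lieNormalizer_span_iff]
  rintro _ ⟨⟨x, l⟩, rfl⟩
  rw [← lie_skew, ← leftNormedWord_append_singleton]
  exact Submodule.neg_mem _ (Submodule.subset_span ⟨_, rfl⟩)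

theorem leftNormedWord_mem_of_lie_mem
    {φ : FreeLieAlgebra R (X ⊕ X) →ₗ⁅R⁆ FreeLieAlgebra R (X ⊕ X)}
    (hφr : ∀ x : X, φ (of R (Sum.inr x)) = of R (Sum.inl x))
    {W : Submodule R (FreeLieAlgebra R (X ⊕ X))} (hgen : ∀ x : X, of R (Sum.inr x) ∈ W)
    (hlie : ∀ a b, a ∈ W → b ∈ W → ⁅a, φ b⁆ ∈ W) (p : X × List X) :
    leftNormedWord R X p ∈ W := by
  obtain ⟨x, l⟩ := p
  induction l using List.reverseRecOn with
  | nil => exact hgen x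
  | append_singleton l y ih =>
    rw [leftNormedWord_append_singleton, ← hφr y]
    exact hlie _ _ ih (hgen y)

end Span

/-- The free Leibniz algebra `V₂` (the closure of the dotted generators of
`FreeLieAlgebra k (X ⊕ X)` under the two di-algebra operations) equals the linear span of the
left-normed bracket words `⁅…⁅⁅ẋ, x̄₂⁆, x̄₃⁆, …, x̄ₙ⁆`; together with their linear independence,
these words form a `k`-basis of `V₂`. -/
theorem free_leibniz_basis (k : Type*) [Field k] (X : Type*)
    (φ : FreeLieAlgebra k (X ⊕ X) →ₗ⁅k⁆ FreeLieAlgebra k (X ⊕ X))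
    (hφl : ∀ x : X, φ (FreeLieAlgebra.of k (Sum.inl x)) = FreeLieAlgebra.of k (Sum.inl x))
    (hφr : ∀ x : X, φ (FreeLieAlgebra.of k (Sum.inr x)) = FreeLieAlgebra.of k (Sum.inl x)) :
    sInf {W : Submodule k (FreeLieAlgebra k (X ⊕ X)) |
        (∀ x : X, FreeLieAlgebra.of k (Sum.inr x) ∈ W) ∧
        ∀ a b : FreeLieAlgebra k (X ⊕ X), a ∈ W → b ∈ W → ⁅φ a, b⁆ ∈ W ∧ ⁅a, φ b⁆ ∈ W} =
      Submodule.span k (Set.range fun p : X × List X =>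
        List.foldl
          (fun (u : FreeLieAlgebra k (X ⊕ X)) (y : X) => ⁅u, FreeLieAlgebra.of k (Sum.inl y)⁆)
          (FreeLieAlgebra.of k (Sum.inr p.1)) p.2) ∧
    LinearIndependent k (fun p : X × List X =>
      List.foldl
        (fun (u : FreeLieAlgebra k (X ⊕ X)) (y : X) => ⁅u, FreeLieAlgebra.of k (Sum.inl y)⁆)
        (FreeLieAlgebra.of k (Sum.inr p.1)) p.2) := by
  change _ = Submodule.span k (Set.range (leftNormedWord k X)) ∧
    LinearIndependent k (leftNormedWord k X)
  set V := Submodule.span k (Set.range (leftNormedWord k X))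
  have hφV : ∀ a, φ a ∈ V.lieNormalizer := apply_mem_of_forall_of_mem φ <| by
    rintro (y | x)
    · rw [hφl]; exact of_inl_mem_lieNormalizer_span_leftNormedWord y
    · rw [hφr]; exact of_inl_mem_lieNormalizer_span_leftNormedWord x
  have hV_closed : (∀ x : X, of k (Sum.inr x) ∈ V) ∧
      ∀ a b, a ∈ V → b ∈ V → ⁅φ a, b⁆ ∈ V ∧ ⁅a, φ b⁆ ∈ V := by
    refine ⟨fun x ↦ Submodule.subset_span ⟨(x, []), rfl⟩, fun a b ha hb ↦ ⟨hφV a b hb, ?_⟩⟩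
    rw [← lie_skew]
    exact V.neg_mem (hφV b a ha)
  refine ⟨le_antisymm (sInf_le hV_closed) ?_, linearIndependent_leftNormedWord⟩
  rw [Submodule.span_le]
  rintro _ ⟨p, rfl⟩
  exact Submodule.mem_sInf.mpr fun W hW ↦
    leftNormedWord_mem_of_lie_mem hφr hW.1 (fun a b ha hb ↦ (hW.2 a b ha hb).2) p
end

section
/- Let k be a field and take X = Bool; in F := FreeLieAlgebra k (Bool ⊕ Bool) write x̄ := ι(Sum.inl true), ȳ := ι(Sum.inl false), ẋ := ι(Sum.inr true), ẏ := ι(Sum.inr false), and let φ : F → F be the unique Lie algebra homomorphism with φ(x̄) = x̄, φ(ȳ) = ȳ, φ(ẋ) = x̄, φ(ẏ) = ȳ. Let V₂ be the smallest k-submodule of F containing ẋ, ẏ and closed under a, b ∈ V₂ ⇒ ⁅φ(a), b⁆, ⁅a, φ(b)⁆ ∈ V₂. Let f := ⁅ẋ, ȳ⁆ + ⁅ẏ, x̄⁆ + ẏ, and let J be the smallest k-submodule of F containing f such that for all j ∈ J and v ∈ V₂: ⁅φ(v), j⁆, ⁅j, φ(v)⁆, ⁅v, φ(j)⁆, ⁅φ(j),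 v⁆ ∈ J. Define w₀ := ẋ and wₙ₊₁ := ⁅wₙ, x̄⁆. Then J ⊆ V₂, and the images of ẏ together with all wₙ (n ≥ 0) form a k-basis of the quotient module V₂ / J. -/
/-!
`V₂` itself contains `f` and is closed under the operations defining `J`, so `J ⊆ V₂`.

Spanning: `J + span {ẏ, wₙ}` contains `ẋ = w₀, ẏ` and is closed under `⊢` and `⊣`. Indeed
`φ f = ȳ`, so bracketing anything in `V₂` with `ȳ` lands in `J`; and `φ ẏ = ȳ`, `φ w₀ = x̄`,
`φ wₙ₊₁ = 0`, while bracketing with `x̄` sends `wₙ` to `wₙ₊₁` and `ẏ` to `-ẏ` modulo `J`.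

Independence: let `F` act on `E = k^(Option ℕ) ⊕ k` by `x̄ ↦ X`, `ȳ ↦ 0`, `ẋ ↦ X + e_{w₀}`,
`ẏ ↦ e_ẏ`, where `X` is a signed shift of the basis and `e_m` maps the last coordinate to `m`.
The elements `u` with `ρ u (0, 1) = 0` and `ρ (φ u) = 0` form a di-algebra ideal containing `f`,
hence `J`; and `u ↦ ρ u (0, 1)` sends `ẏ` and the `wₙ` to distinct basis vectors.
-/

namespace Stmt15

variable (k : Type*) [Field k]

/-- The free Lie algebra on two copies of `{x, y}` (encoded as `Bool`, with `true ↦ x`,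
`false ↦ y`); `Sum.inl` gives the plain generators, `Sum.inr` the dotted ones. -/
abbrev F := FreeLieAlgebra k (Bool ⊕ Bool)

/-- The idempotent endomorphism `φ` with `φ(x̄) = x̄`, `φ(ȳ) = ȳ`, `φ(ẋ) = x̄`, `φ(ẏ) = ȳ`. -/
noncomputable def phi : F k →ₗ⁅k⁆ F k :=
  FreeLieAlgebra.lift k fun s => FreeLieAlgebra.of k (Sum.inl (Sum.elim id id s))

lemma phi_of (s : Bool ⊕ Bool) :
    phi k (FreeLieAlgebra.of k s) = FreeLieAlgebra.of k (Sum.inl (Sum.elim id id s)) :=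
  congrFun (FreeLieAlgebra.of_comp_lift _) s

/-- `V₂`: the smallest submodule containing the dotted generators and closed under the two
di-algebra operations `a ⊢ b := ⁅φ a, b⁆` and `a ⊣ b := ⁅a, φ b⁆`; it realizes the free Leibniz
algebra on `{x, y}`. -/
noncomputable def V₂ : Submodule k (F k) :=
  sInf {W : Submodule k (F k) |
    (∀ b : Bool, FreeLieAlgebra.of k (Sum.inr b) ∈ W) ∧
    ∀ a b : F k, a ∈ W → b ∈ W → ⁅phi k a, b⁆ ∈ W ∧ ⁅a, phi k b⁆ ∈ W}

/-- The element `f = ⁅ẋ, ȳ⁆ + ⁅ẏ, x̄⁆ + ẏ`, encoding the relation `[x ⊣ y] + [y ⊣ x] + y`. -/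
noncomputable def f : F k :=
  ⁅FreeLieAlgebra.of k (Sum.inr true : Bool ⊕ Bool), FreeLieAlgebra.of k (Sum.inl false : Bool ⊕ Bool)⁆ +
    ⁅FreeLieAlgebra.of k (Sum.inr false : Bool ⊕ Bool), FreeLieAlgebra.of k (Sum.inl true : Bool ⊕ Bool)⁆ +
    FreeLieAlgebra.of k (Sum.inr false : Bool ⊕ Bool)

/-- `J`: the ideal of the di-algebra `V₂` generated by `f`, i.e. the smallest submodule
containing `f` and closed under the di-algebra products with elements of `V₂`. -/
noncomputable def J : Submodule k (F k) :=
  sInf {J : Submodule k (F k) | f k ∈ J ∧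
    ∀ j ∈ J, ∀ v ∈ V₂ k,
      ⁅phi k v, j⁆ ∈ J ∧ ⁅j, phi k v⁆ ∈ J ∧ ⁅v, phi k j⁆ ∈ J ∧ ⁅phi k j, v⁆ ∈ J}

/-- The left-normed words `w₀ = ẋ`, `wₙ₊₁ = ⁅wₙ, x̄⁆`. -/
noncomputable def w : ℕ → F k
  | 0 => FreeLieAlgebra.of k (Sum.inr true)
  | n + 1 => ⁅w n, FreeLieAlgebra.of k (Sum.inl true)⁆

lemma of_inr_mem_V₂ (b : Bool) : FreeLieAlgebra.of k (Sum.inr b) ∈ V₂ k :=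
  Submodule.mem_sInf.2 fun _ hW => hW.1 b

lemma w_mem_V₂ : ∀ n : ℕ, w k n ∈ V₂ k
  | 0 => of_inr_mem_V₂ k true
  | n + 1 => Submodule.mem_sInf.2 fun W hW => by
      have ha : w k n ∈ W := Submodule.mem_sInf.1 (w_mem_V₂ n) W hW
      have hb : FreeLieAlgebra.of k (Sum.inr true) ∈ W := hW.1 true
      have h := (hW.2 _ _ ha hb).2
      rw [phi_of] at h
      exact h

/-- The images of `ẏ` and the `wₙ` in the quotient `V₂ ⧸ J`. -/
noncomputable def fam : Option ℕ → ↥(V₂ k)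
  | none => ⟨FreeLieAlgebra.of k (Sum.inr false), of_inr_mem_V₂ k false⟩
  | some n => ⟨w k n, w_mem_V₂ k n⟩

section General

attribute [local instance] LieRing.ofAssociativeRing

variable {R L M : Type*} [CommRing R] [LieRing L] [LieAlgebra R L] [AddCommGroup M] [Module R M]

def annihilatorLieSubalgebra (v : M) : LieSubalgebra R (Module.End R M) where
  carrier := {A | A v = 0}
  add_mem' hA hB := by simp_all
  zero_mem' := rfl
  smul_mem' c A hA := by simp_all
  lie_mem' hA hB := by simp_all [Ring.lie_def]

@[simp]
theorem mem_annihilatorLieSubalgebra {v : M} {A : Module.End R M} :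
    A ∈ annihilatorLieSubalgebra v ↔ A v = 0 :=
  Iff.rfl

theorem FreeLieAlgebra.hom_apply_mem {X : Type*} (K : LieSubalgebra R L)
    (Φ : FreeLieAlgebra R X →ₗ⁅R⁆ L) (hΦ : ∀ x, Φ (FreeLieAlgebra.of R x) ∈ K)
    (u : FreeLieAlgebra R X) : Φ u ∈ K := by
  let Ψ := FreeLieAlgebra.lift R fun x => (⟨Φ (FreeLieAlgebra.of R x), hΦ x⟩ : K)
  have : K.incl.comp Ψ = Φ := FreeLieAlgebra.hom_ext fun x => by simp [Ψ]
  exact this ▸ (Ψ u).2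

variable (φ : L →ₗ⁅R⁆ L) (ρ : L →ₗ⁅R⁆ Module.End R M) (v : M)

def diKernel : Submodule R L :=
  LinearMap.ker ((LinearMap.applyₗ v).comp (ρ : L →ₗ[R] Module.End R M)) ⊓
    LinearMap.ker ((ρ : L →ₗ[R] Module.End R M).comp (φ : L →ₗ[R] L))

variable {φ ρ v}

theorem mem_diKernel {u : L} : u ∈ diKernel φ ρ v ↔ ρ u v = 0 ∧ ρ (φ u) = 0 := Iff.rfl

theorem phi_lie_mem_diKernel (hv : ∀ u, ρ (φ u) v = 0) {j : L} (hj : j ∈ diKernel φ ρ v)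
    (a : L) : ⁅φ a, j⁆ ∈ diKernel φ ρ v := by
  rw [mem_diKernel] at hj ⊢
  simp [Ring.lie_def, hj.1, hj.2, hv]

theorem lie_phi_mem_diKernel (hφ : ∀ u, φ (φ u) = φ u) {j : L} (hj : j ∈ diKernel φ ρ v)
    (a : L) : ⁅a, φ j⁆ ∈ diKernel φ ρ v := by
  rw [mem_diKernel] at hj ⊢
  simp [hφ, hj.2]

theorem linearIndependent_mkQ_comap_subtype {V W : Submodule R L} {ι N : Type*} [AddCommGroup N]
    [Module R N] {b : ι → V} (T : L →ₗ[R] N) (hW : W ≤ LinearMap.ker T)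
    (hb : LinearIndependent R (T ∘ V.subtype ∘ b)) :
    LinearIndependent R ((W.comap V.subtype).mkQ ∘ b) :=
  hb.of_comp ((W.comap V.subtype).liftQ (T ∘ₗ V.subtype)
    (by rw [LinearMap.ker_comp]; exact Submodule.comap_mono hW))

theorem span_range_mkQ_comap_subtype_eq_top_iff {V W : Submodule R L} {ι : Type*} (hW : W ≤ V)
    (b : ι → V) :
    Submodule.span R (Set.range ((W.comap V.subtype).mkQ ∘ b)) = ⊤ ↔
      W ⊔ Submodule.span R (Set.range (V.subtype ∘ b)) = V := by
  rw [Set.range_comp, ← Submodule.map_span, Submodule.map_mkQ_eq_top,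
    ← (Submodule.map_injective_of_injective V.injective_subtype).eq_iff, Submodule.map_sup,
    Submodule.map_comap_subtype, Submodule.map_span, ← Set.range_comp, Submodule.map_subtype_top,
    inf_eq_right.2 hW]

end General

local notation "x̄" => FreeLieAlgebra.of k (Sum.inl true : Bool ⊕ Bool)
local notation "ȳ" => FreeLieAlgebra.of k (Sum.inl false : Bool ⊕ Bool)
local notation "ẋ" => FreeLieAlgebra.of k (Sum.inr true : Bool ⊕ Bool)
local notation "ẏ" => FreeLieAlgebra.of k (Sum.inr false : Bool ⊕ Bool)

theorem phi_phi (u : F k) : phi k (phi k u) = phi k u := by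
  have : (phi k).comp (phi k) = phi k :=
    FreeLieAlgebra.hom_ext fun s => by rcases s with b | b <;> simp [phi_of]
  exact LieHom.congr_fun this u

theorem phi_f : phi k (f k) = ȳ := by
  simp only [f, map_add, LieHom.map_lie, phi_of, Sum.elim_inr, Sum.elim_inl, id]
  rw [← lie_skew]
  abel

theorem phi_w_zero : phi k (w k 0) = x̄ := phi_of k _

theorem phi_w_succ : ∀ n : ℕ, phi k (w k (n + 1)) = 0
  | 0 => by simp [w, phi_of]
  | n + 1 => by rw [w, LieHom.map_lie, phi_w_succ n, zero_lie]

theorem phi_lie_mem_V₂ {a b : F k} (ha : a ∈ V₂ k) (hb : b ∈ V₂ k) : ⁅phi k a, b⁆ ∈ V₂ k :=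
  Submodule.mem_sInf.2 fun W hW =>
    (hW.2 a b (Submodule.mem_sInf.1 ha W hW) (Submodule.mem_sInf.1 hb W hW)).1

theorem lie_phi_mem_V₂ {a b : F k} (ha : a ∈ V₂ k) (hb : b ∈ V₂ k) : ⁅a, phi k b⁆ ∈ V₂ k :=
  Submodule.mem_sInf.2 fun W hW =>
    (hW.2 a b (Submodule.mem_sInf.1 ha W hW) (Submodule.mem_sInf.1 hb W hW)).2

theorem f_mem_V₂ : f k ∈ V₂ k := by
  have hxy := lie_phi_mem_V₂ k (of_inr_mem_V₂ k true) (of_inr_mem_V₂ k false)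
  have hyx := lie_phi_mem_V₂ k (of_inr_mem_V₂ k false) (of_inr_mem_V₂ k true)
  simp only [phi_of, Sum.elim_inr, id] at hxy hyx
  exact add_mem (add_mem hxy hyx) (of_inr_mem_V₂ k false)

theorem f_mem_J : f k ∈ J k := Submodule.mem_sInf.2 fun _ hW => hW.1

theorem phi_lie_mem_J {j a : F k} (hj : j ∈ J k) (ha : a ∈ V₂ k) : ⁅phi k a, j⁆ ∈ J k :=
  Submodule.mem_sInf.2 fun W hW => (hW.2 j (Submodule.mem_sInf.1 hj W hW) a ha).1

theorem lie_phi_mem_J {j a : F k} (hj : j ∈ J k) (ha : a ∈ V₂ k) : ⁅a, phi k j⁆ ∈ J k :=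
  Submodule.mem_sInf.2 fun W hW => (hW.2 j (Submodule.mem_sInf.1 hj W hW) a ha).2.2.1

theorem J_le_V₂ : J k ≤ V₂ k :=
  sInf_le ⟨f_mem_V₂ k, fun _ hj _ hv =>
    ⟨phi_lie_mem_V₂ k hv hj, lie_phi_mem_V₂ k hj hv, lie_phi_mem_V₂ k hv hj,
      phi_lie_mem_V₂ k hj hv⟩⟩

theorem lie_ybar_mem_J {a : F k} (ha : a ∈ V₂ k) : ⁅a, ȳ⁆ ∈ J k :=
  phi_f k ▸ lie_phi_mem_J k (f_mem_J k) ha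

theorem xbar_lie_mem_J {j : F k} (hj : j ∈ J k) : ⁅x̄, j⁆ ∈ J k :=
  phi_of k (Sum.inr true) ▸ phi_lie_mem_J k hj (of_inr_mem_V₂ k true)

theorem ydot_lie_xbar_add_ydot_mem_J : ⁅ẏ, x̄⁆ + ẏ ∈ J k := by
  have h := sub_mem (f_mem_J k) (lie_ybar_mem_J k (of_inr_mem_V₂ k true))
  rwa [f, add_assoc, add_sub_cancel_left] at h

noncomputable def famSpanJ : Submodule k (F k) :=
  J k ⊔ Submodule.span k (Set.range ((V₂ k).subtype ∘ fam k))

theorem fam_mem_famSpanJ (o : Option ℕ) : (fam k o : F k) ∈ famSpanJ k :=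
  Submodule.mem_sup_right (Submodule.subset_span ⟨o, rfl⟩)

theorem famSpanJ_le_V₂ : famSpanJ k ≤ V₂ k :=
  sup_le (J_le_V₂ k) (Submodule.span_le.2 (Set.range_subset_iff.2 fun o => (fam k o).2))

theorem xbar_lie_mem_famSpanJ {a : F k} (ha : a ∈ famSpanJ k) : ⁅x̄, a⁆ ∈ famSpanJ k := by
  suffices famSpanJ k ≤ (famSpanJ k).comap (LieAlgebra.ad k (F k) x̄) from this ha
  refine sup_le (fun j hj => Submodule.mem_sup_left (xbar_lie_mem_J k hj))
    (Submodule.span_le.2 (Set.range_subset_iff.2 ?_))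
  rintro (_ | n)
  · have h : ⁅x̄, ẏ⁆ = ẏ - (⁅ẏ, x̄⁆ + ẏ) := by rw [← lie_skew]; abel
    show ⁅x̄, ẏ⁆ ∈ famSpanJ k
    rw [h]
    exact sub_mem (fam_mem_famSpanJ k none)
      (Submodule.mem_sup_left (ydot_lie_xbar_add_ydot_mem_J k))
  · show ⁅x̄, w k n⁆ ∈ famSpanJ k
    rw [← lie_skew]
    exact neg_mem (fam_mem_famSpanJ k (some (n + 1)))

theorem lie_phi_mem_famSpanJ {a b : F k} (ha : a ∈ famSpanJ k) (hb : b ∈ famSpanJ k) :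
    ⁅a, phi k b⁆ ∈ famSpanJ k := by
  have haV := famSpanJ_le_V₂ k ha
  suffices famSpanJ k ≤ (famSpanJ k).comap (LieAlgebra.ad k (F k) a ∘ₗ (phi k : F k →ₗ[k] F k))
    from this hb
  refine sup_le (fun j hj => Submodule.mem_sup_left (lie_phi_mem_J k hj haV))
    (Submodule.span_le.2 (Set.range_subset_iff.2 ?_))
  rintro (_ | _ | n)
  · show ⁅a, phi k ẏ⁆ ∈ famSpanJ k
    rw [phi_of]
    exact Submodule.mem_sup_left (lie_ybar_mem_J k haV)
  · show ⁅a, phi k (w k 0)⁆ ∈ famSpanJ k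
    rw [phi_w_zero, ← lie_skew]
    exact neg_mem (xbar_lie_mem_famSpanJ k ha)
  · show ⁅a, phi k (w k (n + 1))⁆ ∈ famSpanJ k
    rw [phi_w_succ, lie_zero]
    exact zero_mem _

theorem famSpanJ_eq_V₂ : famSpanJ k = V₂ k := by
  refine le_antisymm (famSpanJ_le_V₂ k)
    (sInf_le ⟨?_, fun a b ha hb => ⟨?_, lie_phi_mem_famSpanJ k ha hb⟩⟩)
  · rintro (_ | _)
    · exact fam_mem_famSpanJ k none
    · exact fam_mem_famSpanJ k (some 0)
  · rw [← lie_skew]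
    exact neg_mem (lie_phi_mem_famSpanJ k hb ha)

section Representation

attribute [local instance] LieRing.ofAssociativeRing

abbrev RepSpace := (Option ℕ →₀ k) × k

/- On `base`, `⁅A, ρ x̄⁆` acts as `-shift` after `A`: these signs make `⁅wₙ, x̄⁆ ↦ wₙ₊₁` and
kill `⁅ẏ, x̄⁆ + ẏ`. -/
noncomputable def shift : (Option ℕ →₀ k) →ₗ[k] Option ℕ →₀ k :=
  Finsupp.linearCombination k fun o =>
    Option.elim o (Finsupp.single none 1) fun n => -Finsupp.single (some (n + 1)) 1

@[simp]
theorem shift_single_none : shift k (Finsupp.single none 1) = Finsupp.single none 1 := by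
  simp [shift]

@[simp]
theorem shift_single_some (n : ℕ) :
    shift k (Finsupp.single (some n) 1) = -Finsupp.single (some (n + 1)) 1 := by
  simp [shift]

noncomputable def shiftOp : Module.End k (RepSpace k) :=
  LinearMap.inl k _ k ∘ₗ shift k ∘ₗ LinearMap.fst k _ k

noncomputable def embedOp (m : Option ℕ →₀ k) : Module.End k (RepSpace k) :=
  LinearMap.inl k _ k ∘ₗ LinearMap.toSpanSingleton k _ m ∘ₗ LinearMap.snd k _ k

noncomputable def ρ : F k →ₗ⁅k⁆ Module.End k (RepSpace k) :=
  FreeLieAlgebra.lift k fun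
    | .inl true => shiftOp k
    | .inl false => 0
    | .inr true => shiftOp k + embedOp k (Finsupp.single (some 0) 1)
    | .inr false => embedOp k (Finsupp.single none 1)

def base : RepSpace k := (0, 1)

@[simp]
theorem shiftOp_apply (v : RepSpace k) : shiftOp k v = (shift k v.1, 0) := rfl

@[simp]
theorem embedOp_apply (m : Option ℕ →₀ k) (v : RepSpace k) : embedOp k m v = (v.2 • m, 0) := rfl

@[simp]
theorem ρ_xbar : ρ k x̄ = shiftOp k := FreeLieAlgebra.lift_of_apply _ _

@[simp]
theorem ρ_ybar : ρ k ȳ = 0 := FreeLieAlgebra.lift_of_apply _ _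

@[simp]
theorem ρ_xdot : ρ k ẋ = shiftOp k + embedOp k (Finsupp.single (some 0) 1) :=
  FreeLieAlgebra.lift_of_apply _ _

@[simp]
theorem ρ_ydot : ρ k ẏ = embedOp k (Finsupp.single none 1) := FreeLieAlgebra.lift_of_apply _ _

theorem ρ_phi_apply_base (u : F k) : ρ k (phi k u) (base k) = 0 := by
  refine FreeLieAlgebra.hom_apply_mem (annihilatorLieSubalgebra (base k))
    ((ρ k).comp (phi k)) ?_ u
  rintro ((_ | _) | (_ | _)) <;> simp [phi_of, base]

theorem f_mem_diKernel : f k ∈ diKernel (phi k) (ρ k) (base k) := by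
  rw [mem_diKernel, phi_f]
  constructor
  · simp [f, base, Ring.lie_def]
  · exact ρ_ybar k

theorem J_le_diKernel : J k ≤ diKernel (phi k) (ρ k) (base k) := by
  have hv := ρ_phi_apply_base k
  refine sInf_le ⟨f_mem_diKernel k, fun j hj a _ => ⟨?_, ?_, ?_, ?_⟩⟩
  · exact phi_lie_mem_diKernel hv hj a
  · rw [← lie_skew]
    exact neg_mem (phi_lie_mem_diKernel hv hj a)
  · exact lie_phi_mem_diKernel (phi_phi k) hj a
  · rw [← lie_skew]
    exact neg_mem (lie_phi_mem_diKernel (phi_phi k) hj a)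

theorem ρ_w_apply_base : ∀ n : ℕ, ρ k (w k n) (base k) = (Finsupp.single (some n) 1, 0)
  | 0 => by simp [w, base]
  | n + 1 => by
    have hx : ρ k x̄ (base k) = 0 := by simp [base]
    rw [w, LieHom.map_lie, Ring.lie_def, LinearMap.sub_apply, Module.End.mul_apply,
      Module.End.mul_apply, hx, ρ_w_apply_base n]
    simp

theorem ρ_fam_apply_base (o : Option ℕ) : ρ k (fam k o) (base k) = (Finsupp.single o 1, 0) := by
  rcases o with _ | n
  · simp [fam, base]
  · exact ρ_w_apply_base k n

theorem linearIndependent_ρ_fam_apply_base :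
    LinearIndependent k fun o => ρ k (fam k o) (base k) := by
  simp_rw [ρ_fam_apply_base]
  exact (Finsupp.linearIndependent_single_one k (Option ℕ)).map' (LinearMap.inl k _ k)
    (LinearMap.ker_eq_bot.2 LinearMap.inl_injective)

theorem linearIndependent_mkQ_fam :
    LinearIndependent k (((J k).comap (V₂ k).subtype).mkQ ∘ fam k) :=
  linearIndependent_mkQ_comap_subtype
    ((LinearMap.applyₗ (base k)).comp (ρ k : F k →ₗ[k] Module.End k (RepSpace k)))
    ((J_le_diKernel k).trans inf_le_left) (linearIndependent_ρ_fam_apply_base k)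

end Representation

/-- `J ⊆ V₂`, and the images of `ẏ` together with all the left-normed words `wₙ`
form a `k`-basis of the quotient `V₂ / J`, i.e. of the Leibniz algebra presented by generators
`x, y` and the relation `[x ⊣ y] + [y ⊣ x] + y = 0`. -/
theorem leibniz_quotient_basis :
    J k ≤ V₂ k ∧
    LinearIndependent k
      (fun o : Option ℕ => Submodule.mkQ ((J k).comap (V₂ k).subtype) (fam k o)) ∧
    Submodule.span k
      (Set.range fun o : Option ℕ =>
        Submodule.mkQ ((J k).comap (V₂ k).subtype) (fam k o)) = ⊤ :=
  ⟨J_le_V₂ k, linearIndependent_mkQ_fam k,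
    (span_range_mkQ_comap_subtype_eq_top_iff (J_le_V₂ k) (fam k)).2 (famSpanJ_eq_V₂ k)⟩

end Stmt15
end

section
/- Let R be a commutative ring and A an R-module equipped with bilinear operations ⊢ and ⊥ satisfying the Lie tri-algebra identities: x ⊥ y = -(y ⊥ x); ((x⊥y)⊥z) + ((y⊥z)⊥x) + ((z⊥x)⊥y) = 0; x ⊢ (y ⊢ z) = (x ⊢ y) ⊢ z + y ⊢ (x ⊢ z); (x ⊥ y) ⊢ z = (x ⊢ y) ⊢ z; and (x ⊢ y) ⊥ z = x ⊢ (y ⊥ z) + (x ⊢ z) ⊥ y. Define x ⊣ y := -(y ⊢ x). Then for all x, y, z ∈ A: (x ⊥ (y ⊣ z)) + ((x ⊣ z) ⊥ y) - ((x ⊥ y) ⊣ z) = 0. -/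
theorem lie_trialgebra_composition_identity_general (R : Type*) [CommRing R] (A : Type*)
    [AddCommGroup A] [Module R A] (p q : A →ₗ[R] A →ₗ[R] A)
    (hq_skew : ∀ x y : A, q x y = -q y x)
    (h_vdash_perp : ∀ x y z : A, q (p x y) z = p x (q y z) + q (p x z) y) :
    ∀ x y z : A, q x (-p z y) + q (-p z x) y - -p z (q x y) = 0 := by
  intro x y z
  calc q x (-p z y) + q (-p z x) y - -p z (q x y)
      = p z (q x y) + q (p z y) x - q (p z x) y := by
        simp only [map_neg, LinearMap.neg_apply, hq_skew x (p z y)]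
        abel
    _ = 0 := by rw [h_vdash_perp z x y, sub_self]

/-- In any Lie tri-algebra (with operations `⊢`, `⊥` and `x ⊣ y := -(y ⊢ x)`),
the identity `(x ⊥ (y ⊣ z)) + ((x ⊣ z) ⊥ y) - ((x ⊥ y) ⊣ z) = 0` holds. -/
theorem lie_trialgebra_composition_identity (R : Type*) [CommRing R] (A : Type*)
    [AddCommGroup A] [Module R A] (p q : A →ₗ[R] A →ₗ[R] A)
    (hq_skew : ∀ x y : A, q x y = -q y x)
    (hq_jacobi : ∀ x y z : A, q (q x y) z + q (q y z) x + q (q z x) y = 0)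
    (hp_leibniz : ∀ x y z : A, p x (p y z) = p (p x y) z + p y (p x z))
    (h_perp_vdash : ∀ x y z : A, p (q x y) z = p (p x y) z)
    (h_vdash_perp : ∀ x y z : A, q (p x y) z = p x (q y z) + q (p x z) y) :
    ∀ x y z : A, q x (-p z y) + q (-p z x) y - -p z (q x y) = 0 :=
  lie_trialgebra_composition_identity_general R A p q hq_skew h_vdash_perp
end

section
/- Let k be a field and X a type; in F := FreeLieAlgebra k (X ⊕ X), with plain generators x̄ and dotted generators ẋ, let φ : F → F be the unique Lie algebra homomorphism with φ(x̄) = x̄ and φ(ẋ) = x̄, and let V₂ be the smallest k-submodule of F containing all ẋ and closed under the two di-algebra operations (for a, b ∈ V₂: ⁅φ(a), b⁆ ∈ V₂ and ⁅a, φ(b)⁆ ∈ V₂). Let A be a k-module with a bilinear operation ⊢ satisfying the left Leibniz identity x ⊢ (y ⊢ z) = (x ⊢ y) ⊢ z + y ⊢ (x ⊢ z). Then for every map α : X → A there exists a unique k-linear map χ : V₂ → A such that χ(ẋ) = α(x) for all x ∈ X, and for all a, b ∈ V₂: χ(⁅φ(a), b⁆) = χ(a) ⊢ χ(b) and χ(⁅a,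 φ(b)⁆) = -(χ(b) ⊢ χ(a)). -/
/-!
The left Leibniz identity says that left multiplication `L : A → 𝔤𝔩(A)`, `L x = p x`, satisfies
`⁅L x, L y⁆ = L (x ⊢ y)`. Hence inside the affine Lie algebra `A ⋊ 𝔤𝔩(A)` the graph
`{(x, L x)}` is closed under `(u, v) ↦ ⁅π u, v⁆` and `(u, v) ↦ ⁅u, π v⁆`, where `π` kills the
translation part, and on the graph these operations are `⊢` and `⊣`. The Lie homomorphism
`Φ : F → A ⋊ 𝔤𝔩(A)` with `x̄ ↦ (0, L (α x))` and `ẋ ↦ (α x, L (α x))` satisfies `Φ ∘ φ = π ∘ Φ`,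
so it maps `V₂` into the graph; the translation part of `Φ` is then the required `χ`.
Uniqueness holds because `V₂` is generated by the `ẋ` under the two operations.
-/

open LieAlgebra

attribute [local instance] LieRing.ofAssociativeRing

section AffineLieAlgebra

variable {k A : Type*} [CommRing k] [AddCommGroup A] [Module k A]

def AbelianLie (A : Type*) := A

namespace AbelianLie

instance : AddCommGroup (AbelianLie A) := inferInstanceAs (AddCommGroup A)
instance : Module k (AbelianLie A) := inferInstanceAs (Module k A)

instance : LieRing (AbelianLie A) where
  bracket _ _ := 0
  add_lie _ _ _ := (add_zero 0).symm
  lie_add _ _ _ := (add_zero 0).symm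
  lie_self _ := rfl
  leibniz_lie _ _ _ := (add_zero 0).symm

instance : LieAlgebra k (AbelianLie A) where
  lie_smul _ _ _ := (smul_zero _).symm

@[simp] lemma lie_eq_zero (x y : AbelianLie A) : ⁅x, y⁆ = 0 := rfl

variable (k A) in
def of : A ≃ₗ[k] AbelianLie A := LinearEquiv.refl k A

end AbelianLie

open AbelianLie

variable (k A) in
def endDerivation : Module.End k A →ₗ⁅k⁆ LieDerivation k (AbelianLie A) (AbelianLie A) where
  toFun f := ⟨f, fun _ _ => (map_zero f).trans (sub_zero 0).symm⟩
  map_add' _ _ := rfl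
  map_smul' _ _ := rfl
  map_lie' := rfl

@[simp] lemma endDerivation_apply_of (f : Module.End k A) (x : A) :
    endDerivation k A f (of k A x) = of k A (f x) := rfl

variable (k A) in
abbrev AffineLieAlgebra := AbelianLie A ⋊⁅endDerivation k A⁆ Module.End k A

def linearPart : AffineLieAlgebra k A →ₗ⁅k⁆ AffineLieAlgebra k A :=
  (SemiDirectSum.inr _).comp (SemiDirectSum.projr _)

@[simp] lemma linearPart_apply (u : AffineLieAlgebra k A) : linearPart u = ⟨0, u.right⟩ := rfl

def translationPart : AffineLieAlgebra k A →ₗ[k] A :=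
  (of k A).symm.toLinearMap ∘ₗ SemiDirectSum.projl _

end AffineLieAlgebra

section LeftLeibniz

open AbelianLie

variable {k A : Type*} [CommRing k] [AddCommGroup A] [Module k A] (p : A →ₗ[k] A →ₗ[k] A)

def IsLeftLeibniz : Prop := ∀ x y z, p x (p y z) = p (p x y) z + p y (p x z)

def leftMulGraph : A →ₗ[k] AffineLieAlgebra k A where
  toFun x := ⟨of k A x, p x⟩
  map_add' _ _ := by ext <;> simp
  map_smul' _ _ := by ext <;> simp

@[simp] lemma leftMulGraph_left (x : A) : (leftMulGraph p x).left = of k A x := rfl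
@[simp] lemma leftMulGraph_right (x : A) : (leftMulGraph p x).right = p x := rfl

@[simp] lemma translationPart_leftMulGraph (x : A) : translationPart (leftMulGraph p x) = x := rfl

variable {p}

lemma IsLeftLeibniz.lie_leftMul (hp : IsLeftLeibniz p) (x y : A) : ⁅p x, p y⁆ = p (p x y) := by
  ext z
  simp [Ring.lie_def, hp x y z]

lemma IsLeftLeibniz.lie_linearPart_leftMulGraph (hp : IsLeftLeibniz p) (x y : A) :
    ⁅linearPart (leftMulGraph p x), leftMulGraph p y⁆ = leftMulGraph p (p x y) := by
  ext <;> simp [hp.lie_leftMul]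

lemma IsLeftLeibniz.lie_leftMulGraph_linearPart (hp : IsLeftLeibniz p) (x y : A) :
    ⁅leftMulGraph p x, linearPart (leftMulGraph p y)⁆ = leftMulGraph p (-p y x) := by
  ext <;> simp [← lie_skew (p x), hp.lie_leftMul]

end LeftLeibniz

section DiClosure

variable {k L ι : Type*} [CommRing k] [LieRing L] [LieAlgebra k L] (φ : L →ₗ⁅k⁆ L) (g : ι → L)

def diClosure : Submodule k L :=
  sInf {W : Submodule k L | (∀ i, g i ∈ W) ∧
    ∀ a b : L, a ∈ W → b ∈ W → ⁅φ a, b⁆ ∈ W ∧ ⁅a, φ b⁆ ∈ W}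

variable {φ g}

lemma diClosure_le {W : Submodule k L} (hg : ∀ i, g i ∈ W)
    (hW : ∀ a b : L, a ∈ W → b ∈ W → ⁅φ a, b⁆ ∈ W ∧ ⁅a, φ b⁆ ∈ W) : diClosure φ g ≤ W :=
  sInf_le ⟨hg, hW⟩

variable (φ) in
lemma mem_diClosure (i : ι) : g i ∈ diClosure φ g :=
  Submodule.mem_sInf.2 fun _ hW => hW.1 i

lemma lie_mem_diClosure {a b : L} (ha : a ∈ diClosure φ g) (hb : b ∈ diClosure φ g) :
    ⁅φ a, b⁆ ∈ diClosure φ g ∧ ⁅a, φ b⁆ ∈ diClosure φ g := by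
  simp only [diClosure, Submodule.mem_sInf] at *
  exact ⟨fun W hW => (hW.2 a b (ha W hW) (hb W hW)).1, fun W hW => (hW.2 a b (ha W hW) (hb W hW)).2⟩

variable {M : Type*} [AddCommGroup M] [Module k M]

variable (φ g) in
def IsLeibnizExtension (p : M →ₗ[k] M →ₗ[k] M) (α : ι → M) {V : Submodule k L}
    (χ : V →ₗ[k] M) : Prop :=
  (∀ i (h : g i ∈ V), χ ⟨_, h⟩ = α i) ∧
    (∀ (a b : V) (h : ⁅φ a, (b : L)⁆ ∈ V), χ ⟨_, h⟩ = p (χ a) (χ b)) ∧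
    (∀ (a b : V) (h : ⁅(a : L), φ b⁆ ∈ V), χ ⟨_, h⟩ = -p (χ b) (χ a))

theorem IsLeibnizExtension.unique {p : M →ₗ[k] M →ₗ[k] M} {α : ι → M}
    {χ χ' : diClosure φ g →ₗ[k] M} (h : IsLeibnizExtension φ g p α χ)
    (h' : IsLeibnizExtension φ g p α χ') : χ = χ' := by
  have hle : diClosure φ g ≤ (LinearMap.eqLocus χ χ').map (diClosure φ g).subtype := by
    refine diClosure_le (fun i => ⟨⟨g i, mem_diClosure φ i⟩, ?_, rfl⟩) ?_
    · exact (h.1 i _).trans (h'.1 i _).symm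
    rintro _ _ ⟨a, ha : χ a = χ' a, rfl⟩ ⟨b, hb : χ b = χ' b, rfl⟩
    obtain ⟨hl, hr⟩ := lie_mem_diClosure a.2 b.2
    refine ⟨⟨⟨_, hl⟩, ?_, rfl⟩, ⟨⟨_, hr⟩, ?_, rfl⟩⟩
    · change χ _ = χ' _
      rw [h.2.1, h'.2.1, ha, hb]
    · change χ _ = χ' _
      rw [h.2.2, h'.2.2, ha, hb]
  ext v
  obtain ⟨w, hw, hwv⟩ := hle v.2
  rwa [← Subtype.ext hwv]

end DiClosure

section Existence

variable {k L ι A : Type*} [CommRing k] [LieRing L] [LieAlgebra k L] [AddCommGroup A]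
  [Module k A] {φ : L →ₗ⁅k⁆ L} {g : ι → L} {p : A →ₗ[k] A →ₗ[k] A} {α : ι → A}
  {Φ : L →ₗ⁅k⁆ AffineLieAlgebra k A}

lemma IsLeftLeibniz.apply_eq_leftMulGraph (hp : IsLeftLeibniz p)
    (hΦ : ∀ v, Φ (φ v) = linearPart (Φ v)) (hg : ∀ i, Φ (g i) = leftMulGraph p (α i)) {v : L}
    (hv : v ∈ diClosure φ g) : Φ v = leftMulGraph p (translationPart (Φ v)) := by
  suffices hle : diClosure φ g ≤ (LinearMap.range (leftMulGraph p)).comap Φ.toLinearMap by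
    obtain ⟨x, hx : leftMulGraph p x = Φ v⟩ := hle hv
    rw [← hx, translationPart_leftMulGraph]
  refine diClosure_le (fun i => ⟨α i, (hg i).symm⟩) ?_
  rintro a b ⟨x, hx : leftMulGraph p x = Φ a⟩ ⟨y, hy : leftMulGraph p y = Φ b⟩
  refine ⟨⟨p x y, ?_⟩, ⟨-p y x, ?_⟩⟩
  · change _ = Φ _
    rw [LieHom.map_lie, hΦ, ← hx, ← hy, hp.lie_linearPart_leftMulGraph]
  · change _ = Φ _
    rw [LieHom.map_lie, hΦ, ← hx, ← hy, hp.lie_leftMulGraph_linearPart]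

theorem IsLeftLeibniz.exists_isLeibnizExtension (hp : IsLeftLeibniz p)
    (hΦ : ∀ v, Φ (φ v) = linearPart (Φ v)) (hg : ∀ i, Φ (g i) = leftMulGraph p (α i)) :
    ∃ χ : diClosure φ g →ₗ[k] A, IsLeibnizExtension φ g p α χ := by
  set χ := translationPart ∘ₗ Φ.toLinearMap ∘ₗ (diClosure φ g).subtype
  have hχ (v : diClosure φ g) : χ v = translationPart (Φ v) := rfl
  have hgraph (v : diClosure φ g) : Φ v = leftMulGraph p (χ v) :=
    hp.apply_eq_leftMulGraph hΦ hg v.2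
  refine ⟨χ, fun i _ => ?_, fun a b _ => ?_, fun a b _ => ?_⟩
  · rw [hχ, hg, translationPart_leftMulGraph]
  · rw [hχ, LieHom.map_lie, hΦ, hgraph a, hgraph b, hp.lie_linearPart_leftMulGraph,
      translationPart_leftMulGraph]
  · rw [hχ, LieHom.map_lie, hΦ, hgraph a, hgraph b, hp.lie_leftMulGraph_linearPart,
      translationPart_leftMulGraph]

end Existence

/-- The submodule `V₂` of `FreeLieAlgebra k (X ⊕ X)` (the closure of the dotted
generators under the two di-algebra operations `a ⊢ b := ⁅φ a, b⁆` and `a ⊣ b := ⁅a, φ b⁆`) is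
the free Leibniz algebra on `X`: every map `α : X → A` into a left Leibniz algebra `A` extends
uniquely to a linear map `χ : V₂ → A` respecting the operations. -/
theorem free_leibniz_universal_property (k : Type*) [Field k] (X : Type*)
    (φ : FreeLieAlgebra k (X ⊕ X) →ₗ⁅k⁆ FreeLieAlgebra k (X ⊕ X))
    (hφl : ∀ x : X, φ (FreeLieAlgebra.of k (Sum.inl x)) = FreeLieAlgebra.of k (Sum.inl x))
    (hφr : ∀ x : X, φ (FreeLieAlgebra.of k (Sum.inr x)) = FreeLieAlgebra.of k (Sum.inl x))
    (V₂ : Submodule k (FreeLieAlgebra k (X ⊕ X)))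
    (hV₂ : V₂ = sInf {W : Submodule k (FreeLieAlgebra k (X ⊕ X)) |
        (∀ x : X, FreeLieAlgebra.of k (Sum.inr x) ∈ W) ∧
        ∀ a b : FreeLieAlgebra k (X ⊕ X), a ∈ W → b ∈ W → ⁅φ a, b⁆ ∈ W ∧ ⁅a, φ b⁆ ∈ W})
    (A : Type*) [AddCommGroup A] [Module k A]
    (p : A →ₗ[k] A →ₗ[k] A)
    (hp_leibniz : ∀ x y z : A, p x (p y z) = p (p x y) z + p y (p x z)) :
    ∀ α : X → A, ∃! χ : V₂ →ₗ[k] A,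
      (∀ (x : X) (h : FreeLieAlgebra.of k (Sum.inr x) ∈ V₂), χ ⟨_, h⟩ = α x) ∧
      (∀ (a b : V₂) (h : ⁅φ (a : FreeLieAlgebra k (X ⊕ X)), (b : FreeLieAlgebra k (X ⊕ X))⁆ ∈ V₂),
        χ ⟨_, h⟩ = p (χ a) (χ b)) ∧
      (∀ (a b : V₂) (h : ⁅(a : FreeLieAlgebra k (X ⊕ X)), φ (b : FreeLieAlgebra k (X ⊕ X))⁆ ∈ V₂),
        χ ⟨_, h⟩ = -p (χ b) (χ a)) := by
  intro α
  subst hV₂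
  let Φ : FreeLieAlgebra k (X ⊕ X) →ₗ⁅k⁆ AffineLieAlgebra k A := FreeLieAlgebra.lift k
    (Sum.elim (fun x => linearPart (leftMulGraph p (α x))) (fun x => leftMulGraph p (α x)))
  have hΦ : Φ.comp φ = linearPart.comp Φ := FreeLieAlgebra.hom_ext fun
    | Sum.inl x => by simp [Φ, hφl]
    | Sum.inr x => by simp [Φ, hφr]
  obtain ⟨χ, hχ⟩ := IsLeftLeibniz.exists_isLeibnizExtension (Φ := Φ) (α := α)
    (g := fun x => FreeLieAlgebra.of k (Sum.inr x)) hp_leibniz (LieHom.congr_fun hΦ)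
    fun x => FreeLieAlgebra.lift_of_apply _ _
  exact ⟨χ, hχ, fun χ' hχ' => (hχ.unique hχ').symm⟩
end
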